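/- arXiv:2512.24012 — 6 statements merged into one kernel-verified Lean document; each statement's English description precedes it below -/
import Mathlib

section
/- Let n ≥ 3 be an odd integer with prime factorization n = p_1^{e_1}···p_r^{e_r} (distinct odd primes p_i), and let g : ℤ → ℝ be an even function (g(−x) = g(x)) with period n (g(x+n) = g(x)). For each k ∈ S_n let k' denote the unique element of S_n with k·k' ≡ ±1 (mod n). Then det[(g(jk))_{j,k∈S_n}] = ε(n) · det[(g(jk'))_{j,k∈S_n}], where ε(n) = −1 if r = 1 and p_1 ≡ 1 or 4e_1+3 (mod 8), ε(n) = −1 if r = 2 and p_1 + p_2 ≡ 0 (mod 4), and ε(n) = 1 otherwise. -/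
open scoped Real

/-- `Sset n` is the set `S_n = {a ∈ ℕ : 1 ≤ a < n/2, gcd(a,n) = 1}`. -/
def Sset (n : ℕ) : Finset ℕ :=
  (Finset.range n).filter fun a => 1 ≤ a ∧ 2 * a < n ∧ Nat.Coprime a n

/-- `eps n` is the sign `ε(n)`: for `n = p₁^{e₁} ⋯ p_r^{e_r}` (distinct odd primes),
`ε(n) = -1` if `r = 1` and `p₁ ≡ 1` or `4e₁+3 (mod 8)`, `ε(n) = -1` if `r = 2` and
`p₁ + p₂ ≡ 0 (mod 4)`, and `ε(n) = 1` otherwise. -/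
noncomputable def eps (n : ℕ) : ℤ := by
  classical
  exact
    if (∃ p e : ℕ, p.Prime ∧ 0 < e ∧ n = p ^ e ∧
        (p % 8 = 1 ∨ p % 8 = (4 * e + 3) % 8)) then -1
    else if (∃ p q ep eq : ℕ, p.Prime ∧ q.Prime ∧ p ≠ q ∧ 0 < ep ∧ 0 < eq ∧
        n = p ^ ep * q ^ eq ∧ (p + q) % 4 = 0) then -1
    else 1


theorem half_card {n : ℕ} (hodd : Odd n) (P : ℕ → Prop) [DecidablePred P]
    (hP0 : ¬ P 0) (hsym : ∀ a, a < n → P a → P (n - a)) :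
    ((Finset.range n).filter P).card
      = 2 * ((Finset.range n).filter fun a => P a ∧ 2 * a < n).card := by
  classical
  have hodd' := Nat.odd_iff.mp hodd
  have hunion : (Finset.range n).filter P
      = ((Finset.range n).filter fun a => P a ∧ 2 * a < n)
        ∪ ((Finset.range n).filter fun a => P a ∧ n < 2 * a) := by
    rw [← Finset.filter_or]
    apply Finset.filter_congr
    intro a ha
    simp only [Finset.mem_range] at ha
    constructor
    · intro hPa
      rcases lt_trichotomy (2*a) n with h|h|h
      · exact Or.inl ⟨hPa, h⟩
      · omega
      · exact Or.inr ⟨hPa, h⟩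
    · rintro (⟨h,_⟩|⟨h,_⟩) <;> exact h
  have hdisj : Disjoint ((Finset.range n).filter fun a => P a ∧ 2 * a < n)
      ((Finset.range n).filter fun a => P a ∧ n < 2 * a) := by
    apply Finset.disjoint_left.mpr
    intro a ha hb
    simp only [Finset.mem_filter, Finset.mem_range] at ha hb
    have := ha.2.2; have := hb.2.2; omega
  have hcard : ((Finset.range n).filter fun a => P a ∧ n < 2 * a).card
      = ((Finset.range n).filter fun a => P a ∧ 2 * a < n).card := by
    apply Finset.card_bij (fun a _ => n - a)
    · intro a ha
      simp only [Finset.mem_filter, Finset.mem_range] at ha ⊢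
      obtain ⟨h1, h2', h3⟩ := ha
      exact ⟨by omega, hsym a h1 h2', by omega⟩
    · intro a ha b hb hab
      simp only [Finset.mem_filter, Finset.mem_range] at ha hb
      omega
    · intro b hb
      simp only [Finset.mem_filter, Finset.mem_range] at hb
      obtain ⟨h1, h2', h3⟩ := hb
      have hb0 : b ≠ 0 := fun h => hP0 (h ▸ h2')
      refine ⟨n - b, ?_, by omega⟩
      simp only [Finset.mem_filter, Finset.mem_range]
      exact ⟨by omega, hsym b h1 h2', by omega⟩
  rw [hunion, Finset.card_union_of_disjoint hdisj, hcard]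
  ring


theorem sign_involutive {α : Type*} [DecidableEq α] [Fintype α]
    (σ0 : Equiv.Perm α) (h0 : ∀ x, σ0 (σ0 x) = x) :
    ∃ m : ℕ, Fintype.card α = (Finset.univ.filter fun x => σ0 x = x).card + 2 * m ∧
      Equiv.Perm.sign σ0 = (-1) ^ m := by
  classical
  have key : ∀ k (prm : Equiv.Perm α), (∀ x, prm (prm x) = x) →
      (Finset.univ.filter fun x => ¬ prm x = x).card = k →
      ∃ m : ℕ, k = 2 * m ∧ Equiv.Perm.sign prm = (-1) ^ m := by
    intro k
    induction k using Nat.strong_induction_on with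
    | _ k ih =>
      intro prm hprm hk
      rcases Nat.eq_zero_or_pos k with hk0 | hpos
      · refine ⟨0, by omega, ?_⟩
        have hprm1 : prm = 1 := by
          ext z
          by_contra hz
          have hmem : z ∈ Finset.univ.filter fun x => ¬ prm x = x := by
            simp only [Finset.mem_filter, Finset.mem_univ, true_and]
            simpa using hz
          have : (Finset.univ.filter fun x => ¬ prm x = x) = ∅ :=
            Finset.card_eq_zero.mp (by omega)
          rw [this] at hmem
          exact absurd hmem (Finset.notMem_empty z)
        simp [hprm1]
      · have hne : (Finset.univ.filter fun x => ¬ prm x = x).Nonempty := by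
          rw [← Finset.card_pos, hk]; exact hpos
        obtain ⟨x, hx⟩ := hne
        simp only [Finset.mem_filter, Finset.mem_univ, true_and] at hx
        set y := prm x with hy
        have hyx : y ≠ x := hx
        have hprmy : prm y = x := hprm x
        set τ : Equiv.Perm α := prm * Equiv.swap x y with hτ
        have hτx : τ x = x := by
          simp only [hτ, Equiv.Perm.mul_apply, Equiv.swap_apply_left]; exact hprmy
        have hτy : τ y = y := by
          simp only [hτ, Equiv.Perm.mul_apply, Equiv.swap_apply_right]; exact hy.symm
        have hτz : ∀ z, z ≠ x → z ≠ y → τ z = prm z := by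
          intro z hzx hzy
          simp only [hτ, Equiv.Perm.mul_apply, Equiv.swap_apply_of_ne_of_ne hzx hzy]
        have hprmzx : ∀ z, z ≠ y → prm z ≠ x := by
          intro z hzy hc
          apply hzy
          have := congrArg prm hc
          rw [hprm z, ← hy] at this
          exact this
        have hprmzy : ∀ z, z ≠ x → prm z ≠ y := by
          intro z hzx hc
          apply hzx
          have := congrArg prm hc
          rw [hprm z, hprmy] at this
          exact this
        have hτinv : ∀ z, τ (τ z) = z := by
          intro z
          by_cases hzx : z = x
          · rw [hzx, hτx, hτx]
          by_cases hzy : z = y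
          · rw [hzy, hτy, hτy]
          · rw [hτz z hzx hzy, hτz (prm z) (hprmzx z hzy) (hprmzy z hzx), hprm]
        have hset : (Finset.univ.filter fun z => ¬ τ z = z)
            = (Finset.univ.filter fun z => ¬ prm z = z) \ {x, y} := by
          ext z
          simp only [Finset.mem_filter, Finset.mem_univ, true_and, Finset.mem_sdiff,
            Finset.mem_insert, Finset.mem_singleton]
          constructor
          · intro hz
            have hzx : z ≠ x := fun hc => hz (hc ▸ hτx)
            have hzy : z ≠ y := fun hc => hz (hc ▸ hτy)
            rw [hτz z hzx hzy] at hz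
            exact ⟨hz, by tauto⟩
          · rintro ⟨hz, hzz⟩
            push_neg at hzz
            rw [hτz z hzz.1 hzz.2]
            exact hz
        have hsub : {x, y} ⊆ (Finset.univ.filter fun z => ¬ prm z = z) := by
          intro z hz
          simp only [Finset.mem_insert, Finset.mem_singleton] at hz
          simp only [Finset.mem_filter, Finset.mem_univ, true_and]
          rcases hz with rfl | rfl
          · exact hx
          · rw [hprmy]; exact fun hc => hyx hc.symm
        have hcardxy : ({x, y} : Finset α).card = 2 := by
          rw [Finset.card_insert_of_notMem (by simpa using hyx.symm), Finset.card_singleton]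
        have hcardτ : (Finset.univ.filter fun z => ¬ τ z = z).card = k - 2 := by
          rw [hset, Finset.card_sdiff_of_subset hsub, hcardxy, hk]
        have hk2 : 2 ≤ k := by
          have := Finset.card_le_card hsub
          rw [hcardxy, hk] at this
          exact this
        obtain ⟨m', hm', hsτ⟩ := ih (k - 2) (by omega) τ hτinv hcardτ
        refine ⟨m' + 1, by omega, ?_⟩
        have hsign : Equiv.Perm.sign τ = Equiv.Perm.sign prm * (-1) := by
          rw [hτ, Equiv.Perm.sign_mul, Equiv.Perm.sign_swap (Ne.symm hyx)]
        have : Equiv.Perm.sign prm = Equiv.Perm.sign τ * (-1) := by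
          rw [hsign, mul_assoc]; simp
        rw [this, hsτ, pow_succ]
  obtain ⟨m, hm, hs⟩ := key _ σ0 h0 rfl
  refine ⟨m, ?_, hs⟩
  have := Finset.card_filter_add_card_filter_not
    (s := (Finset.univ : Finset α)) (p := fun x => σ0 x = x)
  rw [Finset.card_univ] at this
  omega

def SC (c : ℤ) (n : ℕ) : ℕ :=
  ((Finset.range n).filter fun a : ℕ => ((a : ZMod n))^2 = (c : ZMod n)).card

theorem SC_one (c : ℤ) : SC c 1 = 1 := by
  unfold SC
  rw [Finset.range_one, Finset.filter_singleton, if_pos (Subsingleton.elim _ _)]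
  rfl

theorem SC_eq_univ (c : ℤ) (n : ℕ) [NeZero n] :
    SC c n = (Finset.univ.filter fun x : ZMod n => x^2 = (c : ZMod n)).card := by
  unfold SC
  refine Finset.card_bij (fun (a : ℕ) (_ : a ∈ (Finset.range n).filter
    fun a : ℕ => ((a : ZMod n))^2 = (c : ZMod n)) => ((a : ZMod n))) ?_ ?_ ?_
  · intro a ha
    simp only [Finset.mem_filter, Finset.mem_range] at ha
    simp only [Finset.mem_filter, Finset.mem_univ, true_and]
    exact ha.2
  · intro a ha b hb hab
    simp only [Finset.mem_filter, Finset.mem_range] at ha hb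
    have := congrArg ZMod.val hab
    rwa [ZMod.val_cast_of_lt ha.1, ZMod.val_cast_of_lt hb.1] at this
  · intro x hx
    simp only [Finset.mem_filter, Finset.mem_univ, true_and] at hx
    refine ⟨x.val, ?_, ZMod.natCast_zmod_val x⟩
    simp only [Finset.mem_filter, Finset.mem_range]
    refine ⟨ZMod.val_lt x, ?_⟩
    rw [ZMod.natCast_zmod_val x]
    exact hx

theorem SC_mul (c : ℤ) (m k : ℕ) (h : Nat.Coprime m k) :
    SC c (m * k) = SC c m * SC c k := by
  rcases Nat.eq_zero_or_pos m with rfl | hm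
  · have hk1 : k = 1 := by simpa using h
    subst hk1
    simp [SC]
  rcases Nat.eq_zero_or_pos k with rfl | hk
  · have hm1 : m = 1 := by simpa [Nat.coprime_zero_right] using h
    subst hm1
    simp [SC]
  have : NeZero m := ⟨hm.ne'⟩
  have : NeZero k := ⟨hk.ne'⟩
  have : NeZero (m * k) := ⟨by positivity⟩
  rw [SC_eq_univ, SC_eq_univ, SC_eq_univ]
  let e := ZMod.chineseRemainder h
  rw [← Finset.card_product]
  apply Finset.card_bij (fun x _ => e x)
  · intro x hx
    simp only [Finset.mem_filter, Finset.mem_univ, true_and] at hx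
    simp only [Finset.mem_product, Finset.mem_filter, Finset.mem_univ, true_and]
    have h2 : (e x)^2 = ((c : ZMod m × ZMod k)) := by
      rw [← map_pow, hx, map_intCast]
    constructor
    · have := congrArg Prod.fst h2; simpa using this
    · have := congrArg Prod.snd h2; simpa using this
  · intro a ha b hb hab
    exact e.injective hab
  · intro y hy
    simp only [Finset.mem_product, Finset.mem_filter, Finset.mem_univ, true_and] at hy
    refine ⟨e.symm y, ?_, by simp⟩
    simp only [Finset.mem_filter, Finset.mem_univ, true_and]
    apply e.injective
    rw [map_pow, RingEquiv.apply_symm_apply, map_intCast, Prod.ext_iff]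
    constructor
    · simpa using hy.1
    · simpa using hy.2

section PP
variable {p : ℕ} (hp : p.Prime) (hodd : p % 2 = 1) {e : ℕ} (he : 0 < e)

include hp hodd he in
theorem sols_sq_one : ∀ x : ZMod (p^e), x^2 = 1 → x = 1 ∨ x = -1 := by
  intro x hx
  have : NeZero (p^e) := ⟨pow_ne_zero e hp.ne_zero⟩
  set t : ℤ := (x.val : ℤ) with ht
  have hcast : ((t : ℤ) : ZMod (p^e)) = x := by
    rw [ht, Int.cast_natCast, ZMod.natCast_zmod_val]
  have hdvd : ((p^e : ℕ) : ℤ) ∣ (t - 1) * (t + 1) := by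
    rw [← ZMod.intCast_zmod_eq_zero_iff_dvd]
    push_cast
    rw [hcast]
    linear_combination hx
  have hNq : ((p^e : ℕ) : ℤ) = (p : ℤ)^e := by push_cast; ring
  rw [hNq] at hdvd
  have hq : Prime (p : ℤ) := Nat.prime_iff_prime_int.mp hp
  have hp2 : ¬ ((p : ℤ) ∣ 2) := by
    intro hd
    have hd2 : p ∣ 2 := by exact_mod_cast hd
    have hle := Nat.le_of_dvd (by norm_num) hd2
    have := hp.two_le
    omega
  by_cases hd : (p : ℤ) ∣ t - 1
  · have hnd : ¬ (p : ℤ) ∣ t + 1 := by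
      intro hd2
      exact hp2 (by have := dvd_sub hd2 hd; simpa using this)
    have hcop : IsCoprime ((p:ℤ)^e) (t + 1) :=
      ((hq.coprime_iff_not_dvd).mpr hnd).pow_left
    have : ((p:ℤ)^e) ∣ t - 1 := hcop.dvd_of_dvd_mul_left (by rwa [mul_comm] at hdvd)
    left
    have : ((t - 1 : ℤ) : ZMod (p^e)) = 0 := by
      rw [ZMod.intCast_zmod_eq_zero_iff_dvd, hNq]; exact this
    push_cast at this
    rw [hcast] at this
    linear_combination this
  · have hcop : IsCoprime ((p:ℤ)^e) (t - 1) :=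
      ((hq.coprime_iff_not_dvd).mpr hd).pow_left
    have : ((p:ℤ)^e) ∣ t + 1 := hcop.dvd_of_dvd_mul_right (by rwa [mul_comm] at hdvd)
    right
    have : ((t + 1 : ℤ) : ZMod (p^e)) = 0 := by
      rw [ZMod.intCast_zmod_eq_zero_iff_dvd, hNq]; exact this
    push_cast at this
    rw [hcast] at this
    linear_combination this

include hp hodd he in
theorem neg_one_ne_one_pp : (1 : ZMod (p^e)) ≠ -1 := by
  intro h
  have h2 : ((2 : ℕ) : ZMod (p^e)) = 0 := by
    push_cast
    linear_combination h
  rw [ZMod.natCast_eq_zero_iff] at h2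
  have hle := Nat.le_of_dvd (by norm_num) h2
  have hpe : p ≤ p^e := Nat.le_self_pow he.ne' p
  have : 3 ≤ p := by
    rcases hp.two_le.lt_or_eq with h | h
    · omega
    · omega
  omega

include hp hodd he in
theorem SC_prime_pow_one : SC 1 (p ^ e) = 2 := by
  have : NeZero (p^e) := ⟨pow_ne_zero e hp.ne_zero⟩
  rw [SC_eq_univ]
  have hset : (Finset.univ.filter fun x : ZMod (p^e) => x^2 = ((1:ℤ) : ZMod (p^e)))
      = {1, -1} := by
    ext x
    simp only [Finset.mem_filter, Finset.mem_univ, true_and, Finset.mem_insert,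
      Finset.mem_singleton, Int.cast_one]
    constructor
    · exact sols_sq_one hp hodd he x
    · rintro (rfl | rfl) <;> ring
  rw [hset, Finset.card_insert_of_notMem (by
    simpa using (neg_one_ne_one_pp hp hodd he)), Finset.card_singleton]

include hp hodd in
theorem hensel_neg_one (hp4 : p % 4 = 1) : ∀ e : ℕ, 0 < e → ∃ t : ℤ, ((p:ℤ))^e ∣ t^2 + 1 := by
  have : Fact p.Prime := ⟨hp⟩
  intro e he
  induction e with
  | zero => omega
  | succ e ih =>
    rcases Nat.eq_zero_or_pos e with rfl | hepos
    · -- base case e+1 = 1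
      have hsq : IsSquare (-1 : ZMod p) := ZMod.exists_sq_eq_neg_one_iff.mpr (by omega)
      obtain ⟨z, hz⟩ := hsq
      refine ⟨(z.val : ℤ), ?_⟩
      rw [pow_one, ← ZMod.intCast_zmod_eq_zero_iff_dvd]
      push_cast
      rw [ZMod.natCast_zmod_val]
      linear_combination -hz
    · obtain ⟨t, ht⟩ := ih hepos
      obtain ⟨m, hm⟩ := ht
      -- choose u
      have h2t : ((2 * t : ℤ) : ZMod p) ≠ 0 := by
        intro hc
        rw [ZMod.intCast_zmod_eq_zero_iff_dvd] at hc
        have hq : Prime (p : ℤ) := Nat.prime_iff_prime_int.mp hp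
        rcases hq.dvd_mul.mp hc with h | h
        · have hd2 : p ∣ 2 := by exact_mod_cast h
          have hle := Nat.le_of_dvd (by norm_num) hd2
          have := hp.two_le
          omega
        · -- p ∣ t → p ∣ t² + 1 → p ∣ 1
          have hd1 : (p:ℤ) ∣ t^2 + 1 := dvd_trans (dvd_pow_self _ hepos.ne') ⟨m, hm⟩
          have hd2 : (p:ℤ) ∣ t^2 := dvd_pow h (by norm_num)
          have hone : (p:ℤ) ∣ 1 := by simpa using dvd_sub hd1 hd2
          have hle := Int.le_of_dvd one_pos hone
          have := hp.two_le
          omega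
      set u0 : ZMod p := (-(m : ZMod p)) / ((2*t : ℤ) : ZMod p) with hu0
      set u : ℤ := (u0.val : ℤ) with hu
      have hkey : (p:ℤ) ∣ m + 2*t*u := by
        rw [← ZMod.intCast_zmod_eq_zero_iff_dvd]
        have hcu : ((u : ℤ) : ZMod p) = u0 := by
          rw [hu, Int.cast_natCast, ZMod.natCast_zmod_val]
        have hmul : u0 * (((2*t : ℤ)) : ZMod p) = -(m:ZMod p) := by
          rw [hu0]; exact div_mul_cancel₀ _ h2t
        push_cast at hmul ⊢
        rw [hcu]
        linear_combination hmul
      obtain ⟨w, hw⟩ := hkey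
      refine ⟨t + u * (p:ℤ)^e, ?_⟩
      have hexp : (p:ℤ)^(e+1) ∣ (p:ℤ)^(2*e) := pow_dvd_pow _ (by omega)
      obtain ⟨v, hv⟩ := hexp
      refine ⟨w + u^2 * v, ?_⟩
      linear_combination hm + ((p:ℤ)^e) * hw + u^2 * hv

include hp hodd he in
theorem SC_prime_pow_neg_one : SC (-1) (p ^ e) = if p % 4 = 1 then 2 else 0 := by
  have : NeZero (p^e) := ⟨pow_ne_zero e hp.ne_zero⟩
  by_cases h4 : p % 4 = 1
  · rw [if_pos h4, SC_eq_univ]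
    obtain ⟨t, ht⟩ := hensel_neg_one hp hodd h4 e he
    set i : ZMod (p^e) := ((t:ℤ) : ZMod (p^e)) with hidef
    have hi : i^2 = -1 := by
      have h0 : ((t^2 + 1 : ℤ) : ZMod (p^e)) = 0 := by
        rw [ZMod.intCast_zmod_eq_zero_iff_dvd]
        push_cast
        exact ht
      push_cast at h0
      linear_combination h0
    have hbij : (Finset.univ.filter fun x : ZMod (p^e) => x^2 = ((-1:ℤ) : ZMod (p^e))).card
        = (Finset.univ.filter fun x : ZMod (p^e) => x^2 = ((1:ℤ) : ZMod (p^e))).card := by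
      apply Finset.card_bij (fun x _ => x * (-i))
      · intro x hx
        simp only [Finset.mem_filter, Finset.mem_univ, true_and, Int.cast_neg,
          Int.cast_one] at hx ⊢
        linear_combination i^2 * hx - hi
      · intro a ha b hb hab
        have : a * (-i) * (-i) = b * (-i) * (-i) := by rw [hab]
        have hii : (-i) * (-i) = -1 := by linear_combination hi
        calc a = -(a * (-i) * (-i)) := by rw [mul_assoc, hii]; ring
        _ = -(b * (-i) * (-i)) := by rw [this]
        _ = b := by rw [mul_assoc, hii]; ring
      · intro y hy
        simp only [Finset.mem_filter, Finset.mem_univ, true_and, Int.cast_one] at hy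
        refine ⟨y * i, ?_, by linear_combination -y * hi⟩
        simp only [Finset.mem_filter, Finset.mem_univ, true_and, Int.cast_neg, Int.cast_one]
        linear_combination i^2 * hy + hi
    rw [hbij, ← SC_eq_univ]
    exact SC_prime_pow_one hp hodd he
  · rw [if_neg h4, SC_eq_univ, Finset.card_eq_zero, Finset.filter_eq_empty_iff]
    intro x _
    intro hx
    have : Fact p.Prime := ⟨hp⟩
    set f : ZMod (p^e) →+* ZMod p := ZMod.castHom (dvd_pow_self p he.ne') (ZMod p) with hf
    have hfx : (f x)^2 = -1 := by
      rw [← map_pow, hx]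
      have := map_intCast f (-1 : ℤ)
      simpa using this
    have hsq : IsSquare (-1 : ZMod p) := ⟨f x, by rw [← sq]; exact hfx.symm⟩
    have := ZMod.exists_sq_eq_neg_one_iff.mp hsq
    omega

end PP

theorem odd_factor {n : ℕ} (hodd : Odd n) {p : ℕ} (hp : p ∈ n.primeFactors) : p % 2 = 1 := by
  have hdvd := Nat.dvd_of_mem_primeFactors hp
  rcases Nat.even_or_odd p with he | ho
  · exfalso
    have : (2 : ℕ) ∣ n := dvd_trans he.two_dvd hdvd
    rw [Nat.odd_iff] at hodd
    omega
  · exact Nat.odd_iff.mp ho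

theorem SC_one_formula {n : ℕ} (hn : n ≠ 0) (hodd : Odd n) :
    SC 1 n = 2 ^ n.primeFactors.card := by
  rw [Nat.multiplicative_factorization (SC 1) (fun x y h => SC_mul 1 x y h) (SC_one 1) hn]
  rw [Finsupp.prod, Nat.support_factorization]
  rw [Finset.prod_congr rfl (fun p hp => ?_), Finset.prod_const]
  exact SC_prime_pow_one (Nat.prime_of_mem_primeFactors hp) (odd_factor hodd hp)
    (Nat.Prime.factorization_pos_of_dvd (Nat.prime_of_mem_primeFactors hp) hn
      (Nat.dvd_of_mem_primeFactors hp))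

theorem SC_neg_one_formula {n : ℕ} (hn : n ≠ 0) (hodd : Odd n) :
    SC (-1) n = if (∀ p ∈ n.primeFactors, p % 4 = 1) then 2 ^ n.primeFactors.card else 0 := by
  rw [Nat.multiplicative_factorization (SC (-1)) (fun x y h => SC_mul (-1) x y h) (SC_one (-1)) hn]
  rw [Finsupp.prod, Nat.support_factorization]
  by_cases hall : ∀ p ∈ n.primeFactors, p % 4 = 1
  · rw [if_pos hall]
    rw [Finset.prod_congr rfl (fun p hp => ?_), Finset.prod_const]
    rw [SC_prime_pow_neg_one (Nat.prime_of_mem_primeFactors hp) (odd_factor hodd hp)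
      (Nat.Prime.factorization_pos_of_dvd (Nat.prime_of_mem_primeFactors hp) hn
        (Nat.dvd_of_mem_primeFactors hp)), if_pos (hall p hp)]
  · rw [if_neg hall]
    push_neg at hall
    obtain ⟨p, hp, hp4⟩ := hall
    apply Finset.prod_eq_zero hp
    rw [SC_prime_pow_neg_one (Nat.prime_of_mem_primeFactors hp) (odd_factor hodd hp)
      (Nat.Prime.factorization_pos_of_dvd (Nat.prime_of_mem_primeFactors hp) hn
        (Nat.dvd_of_mem_primeFactors hp)), if_neg hp4]

theorem totient_dvd_pow2 {n : ℕ} (hn : n ≠ 0) (hodd : Odd n) :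
    2 ^ n.primeFactors.card ∣ Nat.totient n := by
  rw [Nat.multiplicative_factorization Nat.totient (fun x y h => Nat.totient_mul h)
    Nat.totient_one hn]
  rw [Finsupp.prod, Nat.support_factorization]
  rw [← Finset.prod_const]
  apply Finset.prod_dvd_prod_of_dvd
  intro p hp
  have hpp := Nat.prime_of_mem_primeFactors hp
  have hpe := Nat.Prime.factorization_pos_of_dvd hpp hn (Nat.dvd_of_mem_primeFactors hp)
  rw [Nat.totient_prime_pow hpp hpe]
  apply Dvd.dvd.mul_left
  have := odd_factor hodd hp
  omega

theorem oddsq_mod8 {p : ℕ} (h : p % 2 = 1) : p * p % 8 = 1 := by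
  obtain ⟨c, hc⟩ : ∃ c, p = 2*c+1 := ⟨p/2, by omega⟩
  rcases Nat.even_or_odd c with ⟨d, hd⟩ | ⟨d, hd⟩
  · have : p * p = 8*(2*d*d + d) + 1 := by subst hc; rw [hd]; ring
    omega
  · have : p * p = 8*(2*d*d + 3*d + 1) + 1 := by subst hc; rw [hd]; ring
    omega

theorem odd_pow_mod8 {p : ℕ} (h : p % 2 = 1) (k : ℕ) :
    p ^ k % 8 = if k % 2 = 0 then 1 else p % 8 := by
  induction k with
  | zero => simp
  | succ k ih =>
    by_cases hk : k % 2 = 0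
    · rw [if_neg (by omega), pow_succ, Nat.mul_mod, ih, if_pos hk]
      omega
    · rw [if_pos (by omega), pow_succ, Nat.mul_mod, ih, if_neg hk, ← Nat.mul_mod]
      exact oddsq_mod8 h

theorem eps_pp {p e : ℕ} (hp : p.Prime) (he : 0 < e) :
    eps (p^e) = if (p % 8 = 1 ∨ p % 8 = (4*e+3) % 8) then -1 else 1 := by
  have hC1 : (∃ p' e' : ℕ, p'.Prime ∧ 0 < e' ∧ p^e = p'^e' ∧
      (p' % 8 = 1 ∨ p' % 8 = (4*e'+3) % 8)) ↔ (p % 8 = 1 ∨ p % 8 = (4*e+3) % 8) := by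
    constructor
    · rintro ⟨p', e', hp', he', heq, hcond⟩
      have hpf : ({p'} : Finset ℕ) = {p} := by
        rw [← Nat.primeFactors_prime_pow he'.ne' hp', ← heq,
            Nat.primeFactors_prime_pow he.ne' hp]
      have hpp : p' = p := by simpa using hpf
      subst hpp
      have hee : e = e' := Nat.pow_right_injective hp.two_le heq
      subst hee
      exact hcond
    · intro h; exact ⟨p, e, hp, he, rfl, h⟩
  have hC2 : ¬ (∃ p' q' a b : ℕ, p'.Prime ∧ q'.Prime ∧ p' ≠ q' ∧ 0 < a ∧ 0 < b ∧
      p^e = p'^a * q'^b ∧ (p' + q') % 4 = 0) := by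
    rintro ⟨p', q', a, b, hp', hq', hne, ha, hb, heq, -⟩
    have h1 : (p^e).primeFactors = {p} := Nat.primeFactors_prime_pow he.ne' hp
    have h2 : (p^e).primeFactors = {p', q'} := by
      rw [heq, Nat.primeFactors_mul (pow_ne_zero a hp'.ne_zero) (pow_ne_zero b hq'.ne_zero),
        Nat.primeFactors_prime_pow ha.ne' hp', Nat.primeFactors_prime_pow hb.ne' hq']
      rfl
    rw [h1] at h2
    have hmp : p' ∈ ({p', q'} : Finset ℕ) := by simp
    have hmq : q' ∈ ({p', q'} : Finset ℕ) := by simp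
    rw [← h2] at hmp hmq
    simp only [Finset.mem_singleton] at hmp hmq
    exact hne (hmp.trans hmq.symm)
  unfold eps
  simp only [hC1, hC2, if_false]

theorem eps_2p {p q a b : ℕ} (hp : p.Prime) (hq : q.Prime) (hpq : p ≠ q)
    (ha : 0 < a) (hb : 0 < b) :
    eps (p^a * q^b) = if (p + q) % 4 = 0 then -1 else 1 := by
  have hpf : (p^a * q^b).primeFactors = {p, q} := by
    rw [Nat.primeFactors_mul (pow_ne_zero a hp.ne_zero) (pow_ne_zero b hq.ne_zero),
      Nat.primeFactors_prime_pow ha.ne' hp, Nat.primeFactors_prime_pow hb.ne' hq]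
    rfl
  have hcard : (p^a * q^b).primeFactors.card = 2 := by
    rw [hpf, Finset.card_insert_of_notMem (by simpa using hpq), Finset.card_singleton]
  have hC1 : ¬ (∃ p' e' : ℕ, p'.Prime ∧ 0 < e' ∧ p^a * q^b = p'^e' ∧
      (p' % 8 = 1 ∨ p' % 8 = (4*e'+3) % 8)) := by
    rintro ⟨p', e', hp', he', heq, -⟩
    rw [heq, Nat.primeFactors_prime_pow he'.ne' hp'] at hcard
    simp at hcard
  have hC2 : (∃ p' q' a' b' : ℕ, p'.Prime ∧ q'.Prime ∧ p' ≠ q' ∧ 0 < a' ∧ 0 < b' ∧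
      p^a * q^b = p'^a' * q'^b' ∧ (p' + q') % 4 = 0) ↔ (p + q) % 4 = 0 := by
    constructor
    · rintro ⟨p', q', a', b', hp', hq', hne, ha', hb', heq, hcond⟩
      have hpf' : (p^a * q^b).primeFactors = {p', q'} := by
        rw [heq, Nat.primeFactors_mul (pow_ne_zero a' hp'.ne_zero) (pow_ne_zero b' hq'.ne_zero),
          Nat.primeFactors_prime_pow ha'.ne' hp',
          Nat.primeFactors_prime_pow hb'.ne' hq']
        rfl
      rw [hpf] at hpf'
      have hmp : p' ∈ ({p, q} : Finset ℕ) := by rw [hpf']; simp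
      have hmq : q' ∈ ({p, q} : Finset ℕ) := by rw [hpf']; simp
      simp only [Finset.mem_insert, Finset.mem_singleton] at hmp hmq
      have : p' + q' = p + q := by
        rcases hmp with rfl | rfl <;> rcases hmq with rfl | rfl <;> omega
      omega
    · intro h
      exact ⟨p, q, a, b, hp, hq, hpq, ha, hb, rfl, h⟩
  unfold eps
  simp only [hC1, hC2, if_false]

theorem eps_big {n : ℕ} (h : 3 ≤ n.primeFactors.card) : eps n = 1 := by
  have hC1 : ¬ (∃ p' e' : ℕ, p'.Prime ∧ 0 < e' ∧ n = p'^e' ∧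
      (p' % 8 = 1 ∨ p' % 8 = (4*e'+3) % 8)) := by
    rintro ⟨p', e', hp', he', heq, -⟩
    rw [heq, Nat.primeFactors_prime_pow he'.ne' hp'] at h
    simp at h
  have hC2 : ¬ (∃ p' q' a' b' : ℕ, p'.Prime ∧ q'.Prime ∧ p' ≠ q' ∧ 0 < a' ∧ 0 < b' ∧
      n = p'^a' * q'^b' ∧ (p' + q') % 4 = 0) := by
    rintro ⟨p', q', a', b', hp', hq', hne, ha', hb', heq, -⟩
    have hpf' : n.primeFactors = {p', q'} := by
      rw [heq, Nat.primeFactors_mul (pow_ne_zero a' hp'.ne_zero) (pow_ne_zero b' hq'.ne_zero),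
        Nat.primeFactors_prime_pow ha'.ne' hp',
        Nat.primeFactors_prime_pow hb'.ne' hq']
      rfl
    rw [hpf'] at h
    have := Finset.card_insert_le p' ({q'} : Finset ℕ)
    simp at this
    omega
  unfold eps
  simp only [hC1, hC2, if_false]

theorem odd_mul_mod4_0 {c d : ℕ} (hc : c % 2 = 1) (hd : d % 4 = 0) : c * d % 4 = 0 := by
  obtain ⟨l, rfl⟩ : ∃ l, d = 4*l := ⟨d/4, by omega⟩
  have : c*(4*l) = 4*(c*l) := by ring
  omega

theorem odd_mul_mod4_2 {c d : ℕ} (hc : c % 2 = 1) (hd : d % 4 = 2) : c * d % 4 = 2 := by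
  obtain ⟨k, rfl⟩ : ∃ k, c = 2*k+1 := ⟨c/2, by omega⟩
  obtain ⟨l, rfl⟩ : ∃ l, d = 4*l+2 := ⟨d/4, by omega⟩
  have : (2*k+1)*(4*l+2) = 4*(2*k*l+k+l)+2 := by ring
  omega

theorem mul4_mod8_00 {X Y : ℕ} (hX : X % 4 = 0) (hY : Y % 4 = 0) : X * Y % 8 = 0 := by
  obtain ⟨x, rfl⟩ : ∃ x, X = 4*x := ⟨X/4, by omega⟩
  obtain ⟨y, rfl⟩ : ∃ y, Y = 4*y := ⟨Y/4, by omega⟩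
  have : 4*x*(4*y) = 8*(2*x*y) := by ring
  omega

theorem mul4_mod8_02 {X Y : ℕ} (hX : X % 4 = 0) (hY : Y % 4 = 2) : X * Y % 8 = 0 := by
  obtain ⟨x, rfl⟩ : ∃ x, X = 4*x := ⟨X/4, by omega⟩
  obtain ⟨y, rfl⟩ : ∃ y, Y = 4*y+2 := ⟨Y/4, by omega⟩
  have : 4*x*(4*y+2) = 8*(2*x*y+x) := by ring
  omega

theorem mul4_mod8_22 {X Y : ℕ} (hX : X % 4 = 2) (hY : Y % 4 = 2) : X * Y % 8 = 4 := by
  obtain ⟨x, rfl⟩ : ∃ x, X = 4*x+2 := ⟨X/4, by omega⟩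
  obtain ⟨y, rfl⟩ : ∃ y, Y = 4*y+2 := ⟨Y/4, by omega⟩
  have : (4*x+2)*(4*y+2) = 8*(2*x*y+x+y)+4 := by ring
  omega

theorem arith_main {n : ℕ} (hn : 3 ≤ n) (hodd : Odd n) (m : ℕ)
    (hm : Nat.totient n = SC 1 n + SC (-1) n + 4 * m) :
    ((-1 : ℤ)) ^ m = eps n := by
  have hn0 : n ≠ 0 := by omega
  have hsign_even : ∀ k : ℕ, k % 2 = 0 → ((-1:ℤ))^k = 1 :=
    fun k h => Even.neg_one_pow (Nat.even_iff.mpr h)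
  have hsign_odd : ∀ k : ℕ, k % 2 = 1 → ((-1:ℤ))^k = -1 :=
    fun k h => Odd.neg_one_pow (Nat.odd_iff.mpr h)
  have hr1 : 1 ≤ n.primeFactors.card :=
    Finset.card_pos.mpr (Nat.nonempty_primeFactors.mpr (by omega))
  by_cases hc1 : n.primeFactors.card = 1
  · obtain ⟨p, hpf⟩ := Finset.card_eq_one.mp hc1
    have hpmem : p ∈ n.primeFactors := by rw [hpf]; simp
    have hp : p.Prime := Nat.prime_of_mem_primeFactors hpmem
    have hop : p % 2 = 1 := odd_factor hodd hpmem
    set e := n.factorization p with hedef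
    have he : 0 < e :=
      Nat.Prime.factorization_pos_of_dvd hp hn0 (Nat.dvd_of_mem_primeFactors hpmem)
    have hne : n = p^e := by
      conv_lhs => rw [← Nat.factorization_prod_pow_eq_self hn0]
      rw [Finsupp.prod, Nat.support_factorization, hpf, Finset.prod_singleton]
    have hS1 : SC 1 n = 2 := by rw [hne]; exact SC_prime_pow_one hp hop he
    have hS2 : SC (-1) n = if p % 4 = 1 then 2 else 0 := by
      rw [hne]; exact SC_prime_pow_neg_one hp hop he
    have htot : Nat.totient n = p^(e-1) * (p-1) := by
      rw [hne]; exact Nat.totient_prime_pow hp he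
    have heps : eps n = if (p % 8 = 1 ∨ p % 8 = (4*e+3) % 8) then -1 else 1 := by
      rw [hne]; exact eps_pp hp he
    have hpow := odd_pow_mod8 hop (e-1)
    have htm : Nat.totient n % 8 = (p^(e-1) % 8) * ((p-1) % 8) % 8 := by
      rw [htot, Nat.mul_mod]
    rw [hS1, hS2] at hm
    rw [heps]
    have hple := hp.two_le
    have hp8 : p % 8 = 1 ∨ p % 8 = 3 ∨ p % 8 = 5 ∨ p % 8 = 7 := by omega
    rcases hp8 with h8 | h8 | h8 | h8
    · rw [if_pos (Or.inl h8)]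
      have h1 : p^(e-1) % 8 = 1 := by rw [hpow]; split_ifs <;> omega
      rw [h1] at htm
      rw [if_pos (by omega : p % 4 = 1)] at hm
      apply hsign_odd
      omega
    · rw [if_neg (by omega : ¬ (p % 4 = 1))] at hm
      rcases Nat.even_or_odd e with heo | heo
      · have he2 : e % 2 = 0 := Nat.even_iff.mp heo
        rw [if_pos (by omega : p % 8 = 1 ∨ p % 8 = (4*e+3) % 8)]
        have h1 : p^(e-1) % 8 = 3 := by rw [hpow, if_neg (by omega)]; omega
        rw [h1] at htm
        apply hsign_odd
        omega
      · have he2 : e % 2 = 1 := Nat.odd_iff.mp heo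
        rw [if_neg (by omega : ¬(p % 8 = 1 ∨ p % 8 = (4*e+3) % 8))]
        have h1 : p^(e-1) % 8 = 1 := by rw [hpow, if_pos (by omega)]
        rw [h1] at htm
        apply hsign_even
        omega
    · rw [if_neg (by omega : ¬(p % 8 = 1 ∨ p % 8 = (4*e+3) % 8))]
      rw [if_pos (by omega : p % 4 = 1)] at hm
      have h1 : p^(e-1) % 8 = 1 ∨ p^(e-1) % 8 = 5 := by rw [hpow]; split_ifs <;> omega
      apply hsign_even
      rcases h1 with h1 | h1 <;> rw [h1] at htm <;> omega
    · rw [if_neg (by omega : ¬ (p % 4 = 1))] at hm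
      rcases Nat.even_or_odd e with heo | heo
      · have he2 : e % 2 = 0 := Nat.even_iff.mp heo
        rw [if_neg (by omega : ¬(p % 8 = 1 ∨ p % 8 = (4*e+3) % 8))]
        have h1 : p^(e-1) % 8 = 7 := by rw [hpow, if_neg (by omega)]; omega
        rw [h1] at htm
        apply hsign_even
        omega
      · have he2 : e % 2 = 1 := Nat.odd_iff.mp heo
        rw [if_pos (by omega : p % 8 = 1 ∨ p % 8 = (4*e+3) % 8)]
        have h1 : p^(e-1) % 8 = 1 := by rw [hpow, if_pos (by omega)]
        rw [h1] at htm
        apply hsign_odd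
        omega
  by_cases hc2 : n.primeFactors.card = 2
  · obtain ⟨p, q, hpq, hpf⟩ := Finset.card_eq_two.mp hc2
    have hpmem : p ∈ n.primeFactors := by rw [hpf]; simp
    have hqmem : q ∈ n.primeFactors := by rw [hpf]; simp
    have hp : p.Prime := Nat.prime_of_mem_primeFactors hpmem
    have hq : q.Prime := Nat.prime_of_mem_primeFactors hqmem
    have hop : p % 2 = 1 := odd_factor hodd hpmem
    have hoq : q % 2 = 1 := odd_factor hodd hqmem
    set a := n.factorization p with hadef
    set b := n.factorization q with hbdef
    have ha : 0 < a :=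
      Nat.Prime.factorization_pos_of_dvd hp hn0 (Nat.dvd_of_mem_primeFactors hpmem)
    have hb : 0 < b :=
      Nat.Prime.factorization_pos_of_dvd hq hn0 (Nat.dvd_of_mem_primeFactors hqmem)
    have hne : n = p^a * q^b := by
      conv_lhs => rw [← Nat.factorization_prod_pow_eq_self hn0]
      rw [Finsupp.prod, Nat.support_factorization, hpf,
        Finset.prod_insert (by simpa using hpq), Finset.prod_singleton]
    have hcop : Nat.Coprime (p^a) (q^b) :=
      Nat.Coprime.pow a b ((Nat.coprime_primes hp hq).mpr hpq)
    have hS1 : SC 1 n = 4 := by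
      rw [hne, SC_mul _ _ _ hcop, SC_prime_pow_one hp hop ha, SC_prime_pow_one hq hoq hb]
    have hS2 : SC (-1) n = (if p % 4 = 1 then 2 else 0) * (if q % 4 = 1 then 2 else 0) := by
      rw [hne, SC_mul _ _ _ hcop, SC_prime_pow_neg_one hp hop ha,
        SC_prime_pow_neg_one hq hoq hb]
    have htot : Nat.totient n = (p^(a-1) * (p-1)) * (q^(b-1) * (q-1)) := by
      rw [hne, Nat.totient_mul hcop, Nat.totient_prime_pow hp ha, Nat.totient_prime_pow hq hb]
    have heps : eps n = if (p + q) % 4 = 0 then -1 else 1 := by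
      rw [hne]; exact eps_2p hp hq hpq ha hb
    have hXodd : p^(a-1) % 2 = 1 := Nat.odd_iff.mp (Odd.pow (Nat.odd_iff.mpr hop))
    have hYodd : q^(b-1) % 2 = 1 := Nat.odd_iff.mp (Odd.pow (Nat.odd_iff.mpr hoq))
    have hple := hp.two_le
    have hqle := hq.two_le
    rw [hS1, hS2] at hm
    rw [heps]
    rcases (by omega : p % 4 = 1 ∨ p % 4 = 3) with hp4 | hp4 <;>
      rcases (by omega : q % 4 = 1 ∨ q % 4 = 3) with hq4 | hq4
    · rw [if_pos hp4, if_pos hq4] at hm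
      have hX : p^(a-1) * (p-1) % 4 = 0 := odd_mul_mod4_0 hXodd (by omega)
      have hY : q^(b-1) * (q-1) % 4 = 0 := odd_mul_mod4_0 hYodd (by omega)
      have hT : Nat.totient n % 8 = 0 := by rw [htot]; exact mul4_mod8_00 hX hY
      rw [if_neg (by omega : ¬ (p + q) % 4 = 0)]
      apply hsign_even
      omega
    · rw [if_pos hp4, if_neg (by omega : ¬ q % 4 = 1)] at hm
      have hX : p^(a-1) * (p-1) % 4 = 0 := odd_mul_mod4_0 hXodd (by omega)
      have hY : q^(b-1) * (q-1) % 4 = 2 := odd_mul_mod4_2 hYodd (by omega)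
      have hT : Nat.totient n % 8 = 0 := by rw [htot]; exact mul4_mod8_02 hX hY
      rw [if_pos (by omega : (p + q) % 4 = 0)]
      apply hsign_odd
      omega
    · rw [if_neg (by omega : ¬ p % 4 = 1), if_pos hq4] at hm
      have hX : p^(a-1) * (p-1) % 4 = 2 := odd_mul_mod4_2 hXodd (by omega)
      have hY : q^(b-1) * (q-1) % 4 = 0 := odd_mul_mod4_0 hYodd (by omega)
      have hT : Nat.totient n % 8 = 0 := by
        rw [htot, mul_comm]; exact mul4_mod8_02 hY hX
      rw [if_pos (by omega : (p + q) % 4 = 0)]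
      apply hsign_odd
      omega
    · rw [if_neg (by omega : ¬ p % 4 = 1), if_neg (by omega : ¬ q % 4 = 1)] at hm
      have hX : p^(a-1) * (p-1) % 4 = 2 := odd_mul_mod4_2 hXodd (by omega)
      have hY : q^(b-1) * (q-1) % 4 = 2 := odd_mul_mod4_2 hYodd (by omega)
      have hT : Nat.totient n % 8 = 4 := by rw [htot]; exact mul4_mod8_22 hX hY
      rw [if_neg (by omega : ¬ (p + q) % 4 = 0)]
      apply hsign_even
      omega
  · have hc3 : 3 ≤ n.primeFactors.card := by omega
    have h23 : (8:ℕ) = 2^3 := by norm_num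
    have h8tot : 8 ∣ Nat.totient n := by
      rw [h23]; exact dvd_trans (pow_dvd_pow 2 hc3) (totient_dvd_pow2 hn0 hodd)
    have h8S1 : 8 ∣ SC 1 n := by
      rw [SC_one_formula hn0 hodd, h23]; exact pow_dvd_pow 2 hc3
    have h8S2 : 8 ∣ SC (-1) n := by
      rw [SC_neg_one_formula hn0 hodd]
      split_ifs
      · rw [h23]; exact pow_dvd_pow 2 hc3
      · exact dvd_zero 8
    rw [eps_big hc3]
    apply hsign_even
    omega

theorem mem_Sset {n a : ℕ} (h : a ∈ Sset n) :
    a < n ∧ 1 ≤ a ∧ 2 * a < n ∧ Nat.Coprime a n := by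
  simp only [Sset, Finset.mem_filter, Finset.mem_range] at h
  tauto


/-- Let `n ≥ 3` be an odd integer and let `g : ℤ → ℝ` be an even function with period `n`.
For each `k ∈ S_n` let `σ k ∈ S_n` satisfy `k · (σ k) ≡ ±1 (mod n)`.  Then
`det[(g(jk))_{j,k ∈ S_n}] = ε(n) · det[(g(j·σ(k)))_{j,k ∈ S_n}]`. -/
theorem statement0 (n : ℕ) (hn : 3 ≤ n) (hodd : Odd n)
    (g : ℤ → ℝ) (hg_even : ∀ x : ℤ, g (-x) = g x) (hg_per : ∀ x : ℤ, g (x + n) = g x)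
    (σ : Sset n → Sset n)
    (hσ : ∀ k : Sset n,
      ((k : ℕ) : ℤ) * ((σ k : ℕ) : ℤ) ≡ 1 [ZMOD n] ∨
      ((k : ℕ) : ℤ) * ((σ k : ℕ) : ℤ) ≡ -1 [ZMOD n]) :
    Matrix.det (Matrix.of fun j k : Sset n => g ((((j : ℕ) * (k : ℕ) : ℕ)) : ℤ)) =
      (eps n : ℝ) *
        Matrix.det (Matrix.of fun j k : Sset n => g ((((j : ℕ) * (σ k : ℕ) : ℕ)) : ℤ)) := by
  classical
  haveI : NeZero n := ⟨by omega⟩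
  haveI : Fact (1 < n) := ⟨by omega⟩
  -- reformulate hσ in ZMod n
  have hσZ : ∀ k : Sset n, ((k:ℕ) : ZMod n) * ((σ k : ℕ) : ZMod n) = 1 ∨
      ((k:ℕ) : ZMod n) * ((σ k : ℕ) : ZMod n) = -1 := by
    intro k
    rcases hσ k with h | h
    · left
      have := (ZMod.intCast_eq_intCast_iff _ _ _).mpr h
      push_cast at this
      exact this
    · right
      have := (ZMod.intCast_eq_intCast_iff _ _ _).mpr h
      push_cast at this
      exact this
  -- uniqueness
  have huniq : ∀ (k m1 m2 : Sset n),
      (((k:ℕ):ZMod n) * ((m1:ℕ):ZMod n) = 1 ∨ ((k:ℕ):ZMod n) * ((m1:ℕ):ZMod n) = -1) →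
      (((k:ℕ):ZMod n) * ((m2:ℕ):ZMod n) = 1 ∨ ((k:ℕ):ZMod n) * ((m2:ℕ):ZMod n) = -1) →
      m1 = m2 := by
    intro k m1 m2 h1 h2
    have hk : IsUnit ((k:ℕ) : ZMod n) :=
      (ZMod.isUnit_iff_coprime _ n).mpr (mem_Sset k.2).2.2.2
    have hcases : ((m1:ℕ) : ZMod n) = ((m2:ℕ):ZMod n) ∨
        ((m1:ℕ):ZMod n) = -((m2:ℕ):ZMod n) := by
      rcases h1 with h1 | h1 <;> rcases h2 with h2 | h2
      · left; exact hk.mul_left_cancel (by rw [h1, h2])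
      · right; exact hk.mul_left_cancel (by rw [h1, mul_neg, h2]; ring)
      · right; exact hk.mul_left_cancel (by rw [h1, mul_neg, h2])
      · left; exact hk.mul_left_cancel (by rw [h1, h2])
    have hm1 := mem_Sset m1.2
    have hm2 := mem_Sset m2.2
    rcases hcases with hc | hc
    · apply Subtype.ext
      have := congrArg ZMod.val hc
      rwa [ZMod.val_cast_of_lt hm1.1, ZMod.val_cast_of_lt hm2.1] at this
    · exfalso
      have hzero : (((m1:ℕ) + (m2:ℕ) : ℕ) : ZMod n) = 0 := by
        push_cast
        rw [hc]; ring
      rw [ZMod.natCast_eq_zero_iff] at hzero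
      have := Nat.le_of_dvd (by omega) hzero
      omega
  -- σ is involutive
  have hinv : Function.Involutive σ := by
    intro k
    apply huniq (σ k) (σ (σ k)) k (hσZ (σ k))
    rcases hσZ k with h | h
    · left; rwa [mul_comm] at h
    · right; rwa [mul_comm] at h
  -- fixed points characterization
  have hfixiff : ∀ k : Sset n,
      (σ k = k ↔ (((k:ℕ):ZMod n)^2 = ((1:ℤ) : ZMod n) ∨ ((k:ℕ):ZMod n)^2 = ((-1:ℤ) : ZMod n))) := by
    intro k
    push_cast
    constructor
    · intro h
      rcases hσZ k with hh | hh <;> rw [h] at hh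
      · left; rwa [← sq] at hh
      · right; rwa [← sq] at hh
    · intro h
      apply huniq k (σ k) k (hσZ k)
      rcases h with h | h
      · left; rwa [sq] at h
      · right; rwa [sq] at h
  -- the permutation
  set prm : Equiv.Perm (Sset n) := hinv.toPerm σ with hprm
  obtain ⟨m, hcardeq, hsigneq⟩ := sign_involutive prm (fun x => hinv x)
  -- card of Sset n
  have hP0c : ¬ Nat.Coprime 0 n := by
    simp only [Nat.coprime_zero_left]
    omega
  have htotS : Nat.totient n = 2 * (Sset n).card := by
    have hhalf := half_card hodd (fun a => Nat.Coprime a n) hP0c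
      (fun a ha hcop => by
        have hcop' : Nat.Coprime a n := hcop
        show Nat.Coprime (n - a) n
        rw [← ZMod.isUnit_iff_coprime] at hcop' ⊢
        have hval : (((n - a : ℕ)) : ZMod n) = -((a:ℕ) : ZMod n) := by
          rw [Nat.cast_sub (le_of_lt ha), ZMod.natCast_self]
          ring
        rw [hval]
        exact hcop'.neg)
    have h1 : Nat.totient n = ((Finset.range n).filter fun a => Nat.Coprime a n).card := by
      rw [Nat.totient_eq_card_coprime]
      congr 1
      apply Finset.filter_congr
      intro a _
      simp [Nat.coprime_comm]
    have h2 : Sset n = (Finset.range n).filter fun a => Nat.Coprime a n ∧ 2 * a < n := by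
      ext a
      simp only [Sset, Finset.mem_filter, Finset.mem_range]
      constructor
      · rintro ⟨h, _, hlt, hcop⟩; exact ⟨h, hcop, hlt⟩
      · rintro ⟨h, hcop, hlt⟩
        refine ⟨h, ?_, hlt, hcop⟩
        rcases Nat.eq_zero_or_pos a with rfl | hpos
        · exact absurd hcop hP0c
        · exact hpos
    rw [h1, h2, hhalf]
  -- fixed-point count
  have hP0x : ¬ (((0:ℕ):ZMod n)^2 = ((1:ℤ) : ZMod n) ∨ ((0:ℕ):ZMod n)^2 = ((-1:ℤ) : ZMod n)) := by
    push_cast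
    rintro (h | h)
    · exact one_ne_zero (by linear_combination -h)
    · exact one_ne_zero (by linear_combination h)
  have hfixcard : 2 * (Finset.univ.filter fun k : {x // x ∈ Sset n} => σ k = k).card
      = SC 1 n + SC (-1) n := by
    have hbij : (Finset.univ.filter fun k : {x // x ∈ Sset n} => σ k = k).card
        = ((Finset.range n).filter fun a =>
            (((a:ℕ):ZMod n)^2 = ((1:ℤ) : ZMod n) ∨ ((a:ℕ):ZMod n)^2 = ((-1:ℤ) : ZMod n))
              ∧ 2 * a < n).card := by
      refine Finset.card_bij (fun (k : {x // x ∈ Sset n})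
        (_ : k ∈ Finset.univ.filter fun k => σ k = k) => (k : ℕ)) ?_ ?_ ?_
      · intro k hk
        simp only [Finset.mem_filter, Finset.mem_univ, true_and] at hk
        simp only [Finset.mem_filter, Finset.mem_range]
        exact ⟨(mem_Sset k.2).1, (hfixiff k).mp hk, (mem_Sset k.2).2.2.1⟩
      · intro a _ b _ hab
        exact Subtype.ext hab
      · intro a ha
        simp only [Finset.mem_filter, Finset.mem_range] at ha
        obtain ⟨han, hasq, halt⟩ := ha
        have ha0 : 1 ≤ a := by
          rcases Nat.eq_zero_or_pos a with rfl | hpos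
          · exact absurd hasq hP0x
          · exact hpos
        have hcop : Nat.Coprime a n := by
          rw [← ZMod.isUnit_iff_coprime]
          rcases hasq with h | h
          · push_cast at h
            exact IsUnit.of_mul_eq_one _ (by rw [← sq]; exact h)
          · push_cast at h
            exact IsUnit.of_mul_eq_one (-((a:ℕ):ZMod n)) (by rw [mul_neg, ← sq, h]; ring)
        have hmem : a ∈ Sset n := by
          simp only [Sset, Finset.mem_filter, Finset.mem_range]
          exact ⟨han, ha0, halt, hcop⟩
        refine ⟨⟨a, hmem⟩, ?_, rfl⟩
        simp only [Finset.mem_filter, Finset.mem_univ, true_and]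
        exact (hfixiff ⟨a, hmem⟩).mpr hasq
    have hhalf := half_card hodd (fun a =>
        ((a:ℕ):ZMod n)^2 = ((1:ℤ) : ZMod n) ∨ ((a:ℕ):ZMod n)^2 = ((-1:ℤ) : ZMod n)) hP0x
      (fun a ha hsq => by
        have hsq' : ((a:ℕ):ZMod n)^2 = ((1:ℤ) : ZMod n) ∨ ((a:ℕ):ZMod n)^2 = ((-1:ℤ) : ZMod n) := hsq
        show (((n - a : ℕ)) : ZMod n)^2 = ((1:ℤ) : ZMod n) ∨
          (((n - a : ℕ)) : ZMod n)^2 = ((-1:ℤ) : ZMod n)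
        have hval : (((n - a : ℕ)) : ZMod n) = -((a:ℕ) : ZMod n) := by
          rw [Nat.cast_sub (le_of_lt ha), ZMod.natCast_self]
          ring
        rw [hval, neg_pow]
        simpa using hsq')
    have hsplit : ((Finset.range n).filter fun a =>
        ((a:ℕ):ZMod n)^2 = ((1:ℤ) : ZMod n) ∨ ((a:ℕ):ZMod n)^2 = ((-1:ℤ) : ZMod n)).card
        = SC 1 n + SC (-1) n := by
      have hdisj : Disjoint
          ((Finset.range n).filter fun a => ((a:ℕ):ZMod n)^2 = ((1:ℤ) : ZMod n))
          ((Finset.range n).filter fun a => ((a:ℕ):ZMod n)^2 = ((-1:ℤ) : ZMod n)) := by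
        apply Finset.disjoint_left.mpr
        intro a ha hb
        simp only [Finset.mem_filter, Finset.mem_range] at ha hb
        have h1 := ha.2
        have h2 := hb.2
        rw [h1] at h2
        have h20 : ((2:ℕ) : ZMod n) = 0 := by push_cast; linear_combination h2
        rw [ZMod.natCast_eq_zero_iff] at h20
        have := Nat.le_of_dvd (by omega) h20
        omega
      rw [Finset.filter_or, Finset.card_union_of_disjoint hdisj]
      rfl
    rw [hbij, ← hhalf, hsplit]
  -- combine counts
  have hcards : Fintype.card {x // x ∈ Sset n} = (Sset n).card := Fintype.card_coe _
  have hfixprm : (Finset.univ.filter fun x : {x // x ∈ Sset n} => prm x = x)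
      = (Finset.univ.filter fun x : {x // x ∈ Sset n} => σ x = x) := by
    apply Finset.filter_congr
    intro x _
    rw [hprm]
    simp [Function.Involutive.coe_toPerm]
  have hmm : Nat.totient n = SC 1 n + SC (-1) n + 4 * m := by
    rw [hfixprm] at hcardeq
    rw [hcards] at hcardeq
    omega
  have heps := arith_main hn hodd m hmm
  -- determinant part
  have hBA : (Matrix.of fun j k : Sset n => g ((((j : ℕ) * (σ k : ℕ) : ℕ)) : ℤ))
      = (Matrix.of fun j k : Sset n => g ((((j : ℕ) * (k : ℕ) : ℕ)) : ℤ)).submatrix id ⇑prm := by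
    ext j k
    simp [Matrix.submatrix_apply, hprm, Function.Involutive.coe_toPerm]
  rw [hBA, Matrix.det_permute']
  have hsZ : ((Equiv.Perm.sign prm : ℤ)) = eps n := by
    rw [hsigneq, ← heps]
    push_cast
    ring
  have hsR : (((Equiv.Perm.sign prm : ℤ)) : ℝ) = ((eps n : ℤ) : ℝ) := by
    exact_mod_cast hsZ
  rw [hsR]
  have heps2 : ((eps n : ℤ) : ℝ) * ((eps n : ℤ) : ℝ) = 1 := by
    have : (eps n) * (eps n) = 1 := by
      rw [← hsZ]
      simp
    exact_mod_cast this
  rw [← mul_assoc, heps2, one_mul]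
end

section
/- Let p be an odd prime. Then ∑_{j∈S_p} sec(2jπ/p) = (p−1)/2 if p ≡ 1 (mod 4), and ∑_{j∈S_p} sec(2jπ/p) = −(p+1)/2 if p ≡ 3 (mod 4). -/
open scoped Real
open Finset

private lemma zeta_pow_p (p : ℕ) (hp : 0 < p) (j : ℕ) :
    Complex.exp (2 * ↑π * Complex.I * j / p) ^ p = 1 := by
  rw [← Complex.exp_nat_mul]
  have : (p : ℂ) * (2 * ↑π * Complex.I * j / p) = (j : ℤ) * (2 * ↑π * Complex.I) := by
    have : (p : ℂ) ≠ 0 := Nat.cast_ne_zero.mpr hp.ne'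
    push_cast
    field_simp
  rw [this, Complex.exp_int_mul_two_pi_mul_I]

private lemma term_eq (p : ℕ) (hodd : Odd p) (hp : 0 < p) (j : ℕ) :
    (Complex.cos (2 * (j : ℂ) * ↑π / p))⁻¹
      = ∑ k ∈ range p, (-1) ^ k * Complex.exp (2 * ↑π * Complex.I * j / p) ^ (2 * k + 1) := by
  set ζ : ℂ := Complex.exp (2 * ↑π * Complex.I * j / p) with hζ
  have hζp : ζ ^ p = 1 := zeta_pow_p p hp j
  have hζ0 : ζ ≠ 0 := Complex.exp_ne_zero _
  have h2cos : 2 * Complex.cos (2 * (j : ℂ) * ↑π / p) * ζ = ζ ^ 2 + 1 := by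
    have := Complex.two_cos (x := 2 * (j : ℂ) * ↑π / p)
    rw [this]
    have e1 : Complex.exp (2 * (j : ℂ) * ↑π / p * Complex.I) = ζ := by
      rw [hζ]; congr 1; ring
    have e2 : Complex.exp (-(2 * (j : ℂ) * ↑π / p) * Complex.I) = ζ⁻¹ := by
      rw [← Complex.exp_neg]; congr 1; ring
    rw [e1, e2]
    field_simp
  have hne : ζ ^ 2 + 1 ≠ 0 := by
    intro h
    have h1 : ζ ^ 2 = -1 := by linear_combination h
    have : ((-1 : ℂ)) ^ p = 1 := by
      rw [← h1, ← pow_mul, mul_comm, pow_mul, hζp, one_pow]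
    rw [hodd.neg_one_pow] at this
    norm_num at this
  have hcos : Complex.cos (2 * (j : ℂ) * ↑π / p) ≠ 0 := by
    intro h
    rw [h] at h2cos
    simp at h2cos
    exact hne h2cos.symm
  have hS : (∑ k ∈ range p, (-ζ ^ 2) ^ k) * (ζ ^ 2 + 1) = 2 := by
    have := geom_sum_mul (-ζ ^ 2) p
    have hodd' : (-ζ ^ 2) ^ p = -(ζ ^ 2) ^ p := hodd.neg_pow _
    rw [hodd'] at this
    have : (∑ i ∈ range p, (-ζ ^ 2) ^ i) * (-ζ ^ 2 - 1) = -2 := by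
      rw [this, ← pow_mul, mul_comm 2 p, pow_mul, hζp, one_pow]; ring
    linear_combination -this
  have key : (Complex.cos (2 * (j : ℂ) * ↑π / p))⁻¹ = ζ * ∑ k ∈ range p, (-ζ ^ 2) ^ k := by
    have hm : Complex.cos (2 * (j : ℂ) * ↑π / p) * (ζ * ∑ k ∈ range p, (-ζ ^ 2) ^ k) = 1 := by
      linear_combination ((∑ k ∈ range p, (-ζ ^ 2) ^ k) / 2) * h2cos + (1 / 2 : ℂ) * hS
    exact inv_eq_of_mul_eq_one_right hm
  rw [key, Finset.mul_sum]
  refine Finset.sum_congr rfl fun k _ => ?_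
  rw [neg_pow, ← pow_mul]
  ring


private lemma roots_sum (p : ℕ) (hp : 0 < p) (m : ℕ) :
    ∑ j ∈ range p, Complex.exp (2 * ↑π * Complex.I * j / p) ^ m
      = if (p : ℕ) ∣ m then (p : ℂ) else 0 := by
  have hpC : (p : ℂ) ≠ 0 := Nat.cast_ne_zero.mpr hp.ne'
  have hterm : ∀ j : ℕ, Complex.exp (2 * ↑π * Complex.I * j / p) ^ m
      = Complex.exp (2 * ↑π * Complex.I * m / p) ^ j := by
    intro j
    rw [← Complex.exp_nat_mul, ← Complex.exp_nat_mul]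
    congr 1
    ring
  simp only [hterm]
  set w : ℂ := Complex.exp (2 * ↑π * Complex.I * m / p) with hw
  by_cases hdvd : p ∣ m
  · obtain ⟨c, rfl⟩ := hdvd
    have : w = 1 := by
      rw [hw]
      have : 2 * ↑π * Complex.I * ↑(p * c) / ↑p = (c : ℤ) * (2 * ↑π * Complex.I) := by
        push_cast
        field_simp
      rw [this, Complex.exp_int_mul_two_pi_mul_I]
    simp [this]
  · have hw1 : w ≠ 1 := by
      intro h
      rw [hw, Complex.exp_eq_one_iff] at h
      obtain ⟨n, hn⟩ := h
      have h2 : (2 * ↑π * Complex.I : ℂ) ≠ 0 := by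
        simp [Real.pi_ne_zero, Complex.I_ne_zero]
      have hmn : (m : ℂ) = n * p := by
        field_simp at hn
        apply mul_left_cancel₀ h2
        linear_combination (2 * ↑π * Complex.I) * hn
      have hZ : (m : ℤ) = n * p := by exact_mod_cast hmn
      have : (p : ℤ) ∣ (m : ℤ) := ⟨n, by linarith⟩
      exact hdvd (Int.natCast_dvd_natCast.mp this)
    have hwp : w ^ p = 1 := by
      rw [hw, ← Complex.exp_nat_mul]
      have : (p : ℂ) * (2 * ↑π * Complex.I * m / p) = (m : ℤ) * (2 * ↑π * Complex.I) := by
        push_cast; field_simp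
      rw [this, Complex.exp_int_mul_two_pi_mul_I]
    rw [if_neg hdvd, geom_sum_eq hw1, hwp]
    simp

private lemma full_sum (p : ℕ) (hp : p.Prime) (hodd : Odd p) :
    ∑ j ∈ range p, (Real.cos (2 * (j : ℝ) * π / p))⁻¹ = (-1) ^ ((p - 1) / 2) * p := by
  have hp0 : 0 < p := hp.pos
  apply Complex.ofReal_injective
  push_cast
  calc ∑ j ∈ range p, (Complex.cos (2 * (j : ℂ) * ↑π / p))⁻¹
      = ∑ j ∈ range p, ∑ k ∈ range p,
          (-1) ^ k * Complex.exp (2 * ↑π * Complex.I * j / p) ^ (2 * k + 1) := by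
        refine Finset.sum_congr rfl fun j _ => term_eq p hodd hp0 j
    _ = ∑ k ∈ range p, (-1) ^ k *
          ∑ j ∈ range p, Complex.exp (2 * ↑π * Complex.I * j / p) ^ (2 * k + 1) := by
        rw [Finset.sum_comm]
        simp [Finset.mul_sum]
    _ = ∑ k ∈ range p, (-1) ^ k * (if p ∣ (2 * k + 1) then (p : ℂ) else 0) := by
        refine Finset.sum_congr rfl fun k _ => ?_
        rw [roots_sum p hp0]
    _ = (-1) ^ ((p - 1) / 2) * p := by
        rw [Finset.sum_eq_single ((p - 1) / 2)]
        · have : p ∣ 2 * ((p - 1) / 2) + 1 := by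
            have : 2 * ((p - 1) / 2) + 1 = p := by
              obtain ⟨m, hm⟩ := hodd; omega
            rw [this]
          rw [if_pos this]
        · intro k hk hkne
          have hk' : k < p := Finset.mem_range.mp hk
          have : ¬ p ∣ 2 * k + 1 := by
            intro hdv
            obtain ⟨m, hm⟩ := hodd
            by_cases h3 : 2 * k + 1 = p
            · omega
            · have h1 : p ≤ 2 * k + 1 := Nat.le_of_dvd (by omega) hdv
              have h2 : p ∣ (2 * k + 1 - p) := Nat.dvd_sub hdv dvd_rfl
              have h4 : p ≤ 2 * k + 1 - p := Nat.le_of_dvd (by omega) h2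
              omega
          rw [if_neg this, mul_zero]
        · intro h
          exact absurd (Finset.mem_range.mpr (by omega)) h

private lemma Sset_eq (p : ℕ) (hp : p.Prime) : Sset p = Finset.Ico 1 ((p + 1) / 2) := by
  ext a
  simp only [Sset, Finset.mem_filter, Finset.mem_range, Finset.mem_Ico]
  constructor
  · rintro ⟨_, h1, h2, _⟩; omega
  · rintro ⟨h1, h2⟩
    have h2' : 2 * a < p := by omega
    refine ⟨by omega, h1, h2', ?_⟩
    refine Nat.coprime_comm.mp (hp.coprime_iff_not_dvd.mpr fun hdvd => ?_)
    have := Nat.le_of_dvd (by omega) hdvd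
    omega

/-- Let `p` be an odd prime. Then `∑_{j ∈ S_p} sec(2jπ/p) = (p-1)/2` if `p ≡ 1 (mod 4)`,
and `∑_{j ∈ S_p} sec(2jπ/p) = -(p+1)/2` if `p ≡ 3 (mod 4)`. -/
theorem statement6 (p : ℕ) (hp : p.Prime) (hodd : Odd p) :
    (p % 4 = 1 →
      ∑ j ∈ Sset p, (Real.cos (2 * (j : ℝ) * π / p))⁻¹ = ((p : ℝ) - 1) / 2) ∧
    (p % 4 = 3 →
      ∑ j ∈ Sset p, (Real.cos (2 * (j : ℝ) * π / p))⁻¹ = -(((p : ℝ) + 1) / 2)) := by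
  obtain ⟨m, hm⟩ := hodd
  have hp0 : 0 < p := hp.pos
  have hp2 : 2 ≤ p := hp.two_le
  have hpR : (p : ℝ) ≠ 0 := Nat.cast_ne_zero.mpr hp0.ne'
  set f : ℕ → ℝ := fun j => (Real.cos (2 * (j : ℝ) * π / p))⁻¹ with hf
  set s : ℕ := (p + 1) / 2 with hs
  -- symmetry: reflect Ico s p onto Ico 1 s
  have hrefl : ∑ j ∈ Finset.Ico s p, f j = ∑ j ∈ Finset.Ico 1 s, f j := by
    refine Finset.sum_nbij' (fun a => p - a) (fun a => p - a) ?_ ?_ ?_ ?_ ?_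
    · intro a ha; simp only [Finset.mem_Ico] at *; omega
    · intro a ha; simp only [Finset.mem_Ico] at *; omega
    · intro a ha; simp only [Finset.mem_Ico] at ha; show p - (p - a) = a; omega
    · intro a ha; simp only [Finset.mem_Ico] at ha; show p - (p - a) = a; omega
    · intro a ha
      simp only [Finset.mem_Ico] at ha
      have hcast : ((p - a : ℕ) : ℝ) = (p : ℝ) - a := by
        have : a ≤ p := by omega
        push_cast [this]; ring
      simp only [hf, hcast]
      have harg : 2 * ((p : ℝ) - a) * π / p = 2 * π - 2 * (a : ℝ) * π / p := by
        field_simp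
      rw [harg]
      have : Real.cos (2 * π - 2 * (a : ℝ) * π / p) = Real.cos (2 * (a : ℝ) * π / p) := by
        rw [Real.cos_sub, Real.cos_two_pi, Real.sin_two_pi]
        ring
      rw [this]
  have hzero : f 0 = 1 := by simp [hf]
  have hsum : (1 : ℝ) + 2 * ∑ j ∈ Finset.Ico 1 s, f j = (-1) ^ ((p - 1) / 2) * p := by
    have hfull := full_sum p hp ⟨m, hm⟩
    rw [Finset.range_eq_Ico, Finset.sum_eq_sum_Ico_succ_bot (by omega : 0 < p) f] at hfull
    rw [← Finset.sum_Ico_consecutive f (by omega : 1 ≤ s) (by omega : s ≤ p), hrefl] at hfull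
    rw [hzero] at hfull
    linarith [hfull]
  rw [Sset_eq p hp]
  constructor
  · intro h4
    have heven : Even ((p - 1) / 2) := by rw [Nat.even_iff]; omega
    rw [heven.neg_one_pow, one_mul] at hsum
    linarith [hsum]
  · intro h4
    have hoddn : Odd ((p - 1) / 2) := by rw [Nat.odd_iff]; omega
    rw [hoddn.neg_one_pow] at hsum
    linarith [hsum]
end

section
/- Let p be an odd prime and let ψ be the unique nontrivial Dirichlet character modulo 4. Then ∏_{χ even mod p} L(1, χψ) = ( ∏_{χ odd mod 4p} L(1, χ*) / ∏_{χ odd mod p} L(1, χ*) ) · (1 − ψ(p)/p), where the products run over all even Dirichlet characters modulo p, all odd Dirichlet characters modulo 4p, and all odd Dirichlet characters modulo p respectively, and χ* denotes the primitive character inducing χ. -/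
open DirichletCharacter

namespace S7

variable {p : ℕ}

/-- The units CRT equivalence. -/
noncomputable def e (h : Nat.Coprime 4 p) : (ZMod (4*p))ˣ ≃* (ZMod 4)ˣ × (ZMod p)ˣ :=
  (Units.mapEquiv (ZMod.chineseRemainder h).toMulEquiv).trans MulEquiv.prodUnits

lemma e_fst (h : Nat.Coprime 4 p) (u : (ZMod (4*p))ˣ) :
    (e h u).1 = ZMod.unitsMap (dvd_mul_right 4 p) u := by
  ext
  simp [e, MulEquiv.prodUnits, ZMod.unitsMap, ZMod.chineseRemainder, ZMod.castHom]

lemma e_snd (h : Nat.Coprime 4 p) (u : (ZMod (4*p))ˣ) :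
    (e h u).2 = ZMod.unitsMap (dvd_mul_left p 4) u := by
  ext
  simp [e, MulEquiv.prodUnits, ZMod.unitsMap, ZMod.chineseRemainder, ZMod.castHom]

/-- The pairing map. -/
noncomputable def Phi (q : DirichletCharacter ℂ 4 × DirichletCharacter ℂ p) :
    DirichletCharacter ℂ (4*p) :=
  changeLevel (dvd_mul_left p 4) q.2 * changeLevel (dvd_mul_right 4 p) q.1

lemma Phi_apply_unit (q : DirichletCharacter ℂ 4 × DirichletCharacter ℂ p)
    (u : (ZMod (4*p))ˣ) :
    Phi q (u : ZMod (4*p)) =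
      q.1 ((ZMod.unitsMap (dvd_mul_right 4 p) u : (ZMod 4)ˣ) : ZMod 4) *
      q.2 ((ZMod.unitsMap (dvd_mul_left p 4) u : (ZMod p)ˣ) : ZMod p) := by
  rw [Phi, MulChar.mul_apply, changeLevel_eq_cast_of_dvd, changeLevel_eq_cast_of_dvd, mul_comm]
  rfl

end S7

namespace S7
open DirichletCharacter

instance instFiniteDC (n : ℕ) [NeZero n] : Finite (DirichletCharacter ℂ n) :=
  Finite.of_equiv _ (DirichletCharacter.mulEquiv_units ℂ n).some.toEquiv.symm

lemma Phi_injective (h : Nat.Coprime 4 p) [NeZero p] : Function.Injective (Phi (p := p)) := by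
  intro q q' hq
  have key : ∀ a : (ZMod 4)ˣ, ∀ b : (ZMod p)ˣ,
      q.1 (a : ZMod 4) * q.2 (b : ZMod p) = q'.1 (a : ZMod 4) * q'.2 (b : ZMod p) := by
    intro a b
    have := congrArg (fun χ : DirichletCharacter ℂ (4*p) => χ (((e h).symm (a, b) : (ZMod (4*p))ˣ) : ZMod (4*p))) hq
    rw [Phi_apply_unit, Phi_apply_unit] at this
    simp only [← e_fst h, ← e_snd h, MulEquiv.apply_symm_apply] at this
    exact this
  have h1 : ∀ a : (ZMod 4)ˣ, q.1 (a : ZMod 4) = q'.1 (a : ZMod 4) := by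
    intro a
    have := key a 1
    simpa using this
  have h2 : ∀ b : (ZMod p)ˣ, q.2 (b : ZMod p) = q'.2 (b : ZMod p) := by
    intro b
    have := key 1 b
    simpa using this
  exact Prod.ext (MulChar.ext h1) (MulChar.ext h2)

lemma Phi_surjective (h : Nat.Coprime 4 p) [NeZero p] :
    Function.Surjective (Phi (p := p)) := by
  intro Θ
  refine ⟨(MulChar.ofUnitHom (Θ.toUnitHom.comp ((e h).symm.toMonoidHom.comp (MonoidHom.inl _ _))),
          MulChar.ofUnitHom (Θ.toUnitHom.comp ((e h).symm.toMonoidHom.comp (MonoidHom.inr _ _)))), ?_⟩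
  refine MulChar.ext fun u => ?_
  rw [Phi_apply_unit, ← e_fst h, ← e_snd h]
  rw [MulChar.ofUnitHom_coe, MulChar.ofUnitHom_coe]
  simp only [MonoidHom.comp_apply, MulEquiv.coe_toMonoidHom, MonoidHom.inl_apply,
    MonoidHom.inr_apply]
  rw [← Units.val_mul, ← map_mul, ← map_mul]
  have : ((e h u).1, (1 : (ZMod p)ˣ)) * ((1 : (ZMod 4)ˣ), (e h u).2) = e h u := by
    simp [Prod.ext_iff]
  rw [this, MulEquiv.symm_apply_apply]
  simp [MulChar.coe_toUnitHom]

end S7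

namespace S7
open DirichletCharacter

lemma crt_fst {a b : ℕ} (h : Nat.Coprime a b) (x : ZMod (a*b)) :
    (ZMod.chineseRemainder h x).1 = ZMod.castHom (dvd_mul_right a b) (ZMod a) x := by
  simp [ZMod.chineseRemainder, ZMod.castHom]

lemma crt_snd {a b : ℕ} (h : Nat.Coprime a b) (x : ZMod (a*b)) :
    (ZMod.chineseRemainder h x).2 = ZMod.castHom (dvd_mul_left b a) (ZMod b) x := by
  simp [ZMod.chineseRemainder, ZMod.castHom]

lemma cast_castHom {a b N : ℕ} (hab : a ∣ b) (hbN : b ∣ N) (x : ZMod N) :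
    (ZMod.castHom (hab.trans hbN) (ZMod a)) x =
      ZMod.castHom hab (ZMod a) (ZMod.castHom hbN (ZMod b) x) := by
  rw [← ZMod.castHom_comp hab hbN]; rfl

lemma cast_eq_one_of_crt {a b N : ℕ} (hab : Nat.Coprime a b) (hN : a * b ∣ N) (x : ZMod N)
    (ha : ZMod.castHom ((dvd_mul_right a b).trans hN) (ZMod a) x = 1)
    (hb : ZMod.castHom ((dvd_mul_left b a).trans hN) (ZMod b) x = 1) :
    ZMod.castHom hN (ZMod (a*b)) x = 1 := by
  apply (ZMod.chineseRemainder hab).injective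
  rw [map_one]
  have h1 : (1 : ZMod a × ZMod b) = (1, 1) := rfl
  rw [h1, Prod.ext_iff, crt_fst, crt_snd, ← cast_castHom (dvd_mul_right a b) hN,
    ← cast_castHom (dvd_mul_left b a) hN]
  exact ⟨ha, hb⟩

variable {p : ℕ}

lemma Phi_neg_one [NeZero p] (q : DirichletCharacter ℂ 4 × DirichletCharacter ℂ p) :
    Phi q (-1 : ZMod (4*p)) = q.1 (-1) * q.2 (-1) := by
  haveI : NeZero (4*p) := ⟨by simp [NeZero.ne p]⟩
  have h1 : ((-1 : (ZMod (4*p))ˣ) : ZMod (4*p)) = -1 := by simp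
  rw [← h1, Phi_apply_unit]
  have c1 : ((ZMod.unitsMap (dvd_mul_right 4 p) (-1) : (ZMod 4)ˣ) : ZMod 4) = -1 := by
    show ZMod.castHom (dvd_mul_right 4 p) (ZMod 4) ((-1 : (ZMod (4*p))ˣ) : ZMod (4*p)) = -1
    rw [h1, map_neg, map_one]
  have c2 : ((ZMod.unitsMap (dvd_mul_left p 4) (-1) : (ZMod p)ˣ) : ZMod p) = -1 := by
    show ZMod.castHom (dvd_mul_left p 4) (ZMod p) ((-1 : (ZMod (4*p))ˣ) : ZMod (4*p)) = -1
    rw [h1, map_neg, map_one]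
  rw [c1, c2]

lemma zmod4units : ∀ u : (ZMod 4)ˣ, u = 1 ∨ u = -1 := by decide

lemma eq_of_neg_one_eq {α β : DirichletCharacter ℂ 4} (h : α (-1) = β (-1)) : α = β := by
  refine MulChar.ext fun u => ?_
  rcases zmod4units u with rfl | rfl
  · simp
  · simpa using h

lemma psi_odd {ψ : DirichletCharacter ℂ 4} (hψ : ψ ≠ 1) : ψ.Odd := by
  rcases ψ.even_or_odd with h | h
  · exfalso
    apply hψ
    refine eq_of_neg_one_eq ?_
    rw [h]
    have hu : IsUnit (-1 : ZMod 4) := by decide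
    rw [MulChar.one_apply hu]
  · exact h

lemma alpha_cases {ψ : DirichletCharacter ℂ 4} (hψ : ψ ≠ 1) (α : DirichletCharacter ℂ 4) :
    α = 1 ∨ α = ψ := by
  rcases α.even_or_odd with h | h
  · left
    refine eq_of_neg_one_eq ?_
    rw [h]
    have : IsUnit (-1 : ZMod 4) := by decide
    rw [MulChar.one_apply this]
  · right
    exact eq_of_neg_one_eq (by rw [h, psi_odd hψ])

end S7

namespace S7
open DirichletCharacter

lemma eq_changeLevel_primitive {n : ℕ} (χ : DirichletCharacter ℂ n) :
    χ = changeLevel (conductor_dvd_level χ) χ.primitiveCharacter :=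
  Classical.choose_spec (factorsThrough_conductor χ).choose_spec

lemma eval_eq_one_of_cast {N : ℕ} (Θ : DirichletCharacter ℂ N) (u : (ZMod N)ˣ)
    (h : ZMod.castHom (conductor_dvd_level Θ) (ZMod Θ.conductor) (u : ZMod N) = 1) :
    Θ (u : ZMod N) = 1 := by
  conv_lhs => rw [eq_changeLevel_primitive Θ]
  rw [changeLevel_eq_cast_of_dvd]
  rw [ZMod.castHom_apply] at h
  rw [h, map_one]

variable {p : ℕ}

lemma cast4_symm (h : Nat.Coprime 4 p) [NeZero p] (a : (ZMod 4)ˣ) (b : (ZMod p)ˣ) :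
    ZMod.castHom (dvd_mul_right 4 p) (ZMod 4)
      (((e h).symm (a, b) : (ZMod (4*p))ˣ) : ZMod (4*p)) = (a : ZMod 4) := by
  rw [show ZMod.castHom (dvd_mul_right 4 p) (ZMod 4) (((e h).symm (a,b) : (ZMod (4*p))ˣ) :
      ZMod (4*p)) = ((ZMod.unitsMap (dvd_mul_right 4 p) ((e h).symm (a,b)) : (ZMod 4)ˣ) :
      ZMod 4) from rfl, ← e_fst h, MulEquiv.apply_symm_apply]

lemma castp_symm (h : Nat.Coprime 4 p) [NeZero p] (a : (ZMod 4)ˣ) (b : (ZMod p)ˣ) :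
    ZMod.castHom (dvd_mul_left p 4) (ZMod p)
      (((e h).symm (a, b) : (ZMod (4*p))ˣ) : ZMod (4*p)) = (b : ZMod p) := by
  rw [show ZMod.castHom (dvd_mul_left p 4) (ZMod p) (((e h).symm (a,b) : (ZMod (4*p))ˣ) :
      ZMod (4*p)) = ((ZMod.unitsMap (dvd_mul_left p 4) ((e h).symm (a,b)) : (ZMod p)ˣ) :
      ZMod p) from rfl, ← e_snd h, MulEquiv.apply_symm_apply]

lemma Phi_symm_eval (h : Nat.Coprime 4 p) [NeZero p] (q : DirichletCharacter ℂ 4 × DirichletCharacter ℂ p)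
    (a : (ZMod 4)ˣ) (b : (ZMod p)ˣ) :
    Phi q (((e h).symm (a, b) : (ZMod (4*p))ˣ) : ZMod (4*p)) = q.1 (a : ZMod 4) * q.2 (b : ZMod p) := by
  rw [Phi_apply_unit]
  simp only [← e_fst h, ← e_snd h, MulEquiv.apply_symm_apply]

lemma LFun_congr {N a b : ℕ} [NeZero N] [NeZero a] [NeZero b] (hab : a = b) (ha : a ∣ N)
    (hb : b ∣ N) {χa : DirichletCharacter ℂ a} {χb : DirichletCharacter ℂ b}
    (hx : changeLevel ha χa = changeLevel hb χb) (s : ℂ) :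
    DirichletCharacter.LFunction χa s = DirichletCharacter.LFunction χb s := by
  subst hab
  rw [changeLevel_injective ha hx]

lemma eval_congr {N a b : ℕ} [NeZero N] (hab : a = b) (ha : a ∣ N) (hb : b ∣ N)
    {χa : DirichletCharacter ℂ a} {χb : DirichletCharacter ℂ b}
    (hx : changeLevel ha χa = changeLevel hb χb) (m : ℕ) :
    χa (m : ZMod a) = χb (m : ZMod b) := by
  subst hab
  rw [changeLevel_injective ha hx]

end S7

namespace S7
open DirichletCharacter

variable {p : ℕ}

lemma four_dvd_conductor (h : Nat.Coprime 4 p) [NeZero p] {ψ : DirichletCharacter ℂ 4}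
    (hψ : ψ ≠ 1) (χ : DirichletCharacter ℂ p) :
    4 ∣ (Phi (ψ, χ)).conductor := by
  haveI : NeZero (4*p) := ⟨by simp [NeZero.ne p]⟩
  by_contra h4
  obtain ⟨m', n', hm', hn', hc⟩ := Nat.dvd_mul.1 ((Phi (ψ, χ)).conductor_dvd_level)
  have hm2 : m' ∣ 2 := by
    have hm : m' = 1 ∨ m' = 2 ∨ m' = 4 := by
      have h4' : m' ≤ 4 := Nat.le_of_dvd (by norm_num) hm'
      interval_cases m' <;> revert hm' <;> decide
    rcases hm with rfl | rfl | rfl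
    · exact one_dvd 2
    · exact dvd_rfl
    · exact absurd (hc ▸ dvd_mul_right 4 n') h4
  have hc2p : (Phi (ψ, χ)).conductor ∣ 2*p := hc ▸ mul_dvd_mul hm2 hn'
  set u := (e h).symm (-1, 1) with hu
  have hval : Phi (ψ, χ) (u : ZMod (4*p)) = -1 := by
    rw [Phi_symm_eval h]
    simp only [Units.val_neg, Units.val_one, map_one, mul_one]
    exact psi_odd hψ
  have hone : Phi (ψ, χ) (u : ZMod (4*p)) = 1 := by
    apply eval_eq_one_of_cast
    rw [cast_castHom hc2p (show 2*p ∣ 4*p by exact mul_dvd_mul (by norm_num) dvd_rfl)]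
    have h2p : ZMod.castHom (show 2*p ∣ 4*p from mul_dvd_mul (by norm_num) dvd_rfl)
        (ZMod (2*p)) (u : ZMod (4*p)) = 1 := by
      apply cast_eq_one_of_crt (Nat.Coprime.coprime_dvd_left (by norm_num : (2:ℕ) ∣ 4) h)
      · -- cast to ZMod 2
        rw [cast_castHom (show (2:ℕ) ∣ 4 by norm_num) (dvd_mul_right 4 p), cast4_symm h]
        rw [Units.val_neg, Units.val_one, map_neg, map_one]
        decide
      · -- cast to ZMod p
        rw [castp_symm h]
        exact Units.val_one
    rw [h2p, map_one]
  rw [hval] at hone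
  exact (by norm_num : (-1 : ℂ) ≠ 1) hone

end S7

namespace S7
open DirichletCharacter

variable {p : ℕ}

lemma p_dvd_conductor (h : Nat.Coprime 4 p) [hp : Fact p.Prime]
    (ψ : DirichletCharacter ℂ 4) {χ : DirichletCharacter ℂ p} (hχ1 : χ ≠ 1) :
    p ∣ (Phi (ψ, χ)).conductor := by
  haveI : NeZero p := ⟨hp.out.ne_zero⟩
  haveI : NeZero (4*p) := ⟨by simp [NeZero.ne p]⟩
  by_contra hpd
  obtain ⟨m', n', hm', hn', hc⟩ := Nat.dvd_mul.1 ((Phi (ψ, χ)).conductor_dvd_level)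
  have hn1 : n' = 1 := by
    rcases (Nat.Prime.eq_one_or_self_of_dvd hp.out n' hn') with h1 | h1
    · exact h1
    · exact absurd (hc ▸ (h1 ▸ dvd_mul_left n' m')) hpd
  have hc4 : (Phi (ψ, χ)).conductor ∣ 4 := by
    rw [← hc, hn1, mul_one]; exact hm'
  obtain ⟨b, hb⟩ : ∃ b : (ZMod p)ˣ, χ (b : ZMod p) ≠ 1 := by
    by_contra hall
    push_neg at hall
    exact hχ1 (MulChar.eq_one_iff.mpr hall)
  set u := (e h).symm (1, b) with hu
  have hval : Phi (ψ, χ) (u : ZMod (4*p)) = χ (b : ZMod p) := by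
    rw [Phi_symm_eval h]
    simp
  have hone : Phi (ψ, χ) (u : ZMod (4*p)) = 1 := by
    apply eval_eq_one_of_cast
    rw [cast_castHom hc4 (dvd_mul_right 4 p), cast4_symm h]
    rw [Units.val_one, map_one]
  exact hb (hone ▸ hval.symm)

end S7

/-- `L(1, χ*)`, where `χ*` is the primitive Dirichlet character inducing `χ`. -/
noncomputable def LOneStar {N : ℕ} [NeZero N] (χ : DirichletCharacter ℂ N) : ℂ :=
  haveI : NeZero χ.conductor := ⟨DirichletCharacter.conductor_ne_zero χ⟩
  DirichletCharacter.LFunction χ.primitiveCharacter 1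

namespace S7
open DirichletCharacter
variable {p : ℕ}

lemma LOneStar_def {N : ℕ} [NeZero N] (χ : DirichletCharacter ℂ N) :
    LOneStar χ = @DirichletCharacter.LFunction χ.conductor
      ⟨DirichletCharacter.conductor_ne_zero χ⟩ χ.primitiveCharacter 1 := rfl

lemma Phi_one_left (h : Nat.Coprime 4 p) [NeZero p] (β : DirichletCharacter ℂ p) :
    Phi (1, β) = changeLevel (dvd_mul_left p 4) β := by
  rw [Phi]
  simp [changeLevel_one]

lemma LOneStar_Phi_one (h : Nat.Coprime 4 p) [NeZero p] (β : DirichletCharacter ℂ p) :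
    LOneStar (Phi (1, β)) = LOneStar β := by
  haveI : NeZero (4*p) := ⟨by simp [NeZero.ne p]⟩
  set Θ := Phi (1, β) with hΘdef
  have hΘ : Θ = changeLevel (dvd_mul_left p 4) β := Phi_one_left h β
  have hftd : FactorsThrough Θ β.conductor := by
    refine ⟨(conductor_dvd_level β).trans (dvd_mul_left p 4), β.primitiveCharacter, ?_⟩
    rw [hΘ]
    conv_lhs => rw [eq_changeLevel_primitive β]
    rw [← changeLevel_trans]
  have hcd : Θ.conductor ≤ β.conductor := Nat.sInf_le hftd
  have hdc : β.conductor ≤ Θ.conductor := by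
    obtain ⟨m', n', hm', hn', hc⟩ := Nat.dvd_mul.1 (Θ.conductor_dvd_level)
    have hfb : FactorsThrough β n' := by
      rw [factorsThrough_iff_ker_unitsMap hn']
      intro v hv
      rw [MonoidHom.mem_ker] at hv ⊢
      have hbv : β (v : ZMod p) = 1 := by
        have h1 : Θ (((e h).symm (1, v) : (ZMod (4*p))ˣ) : ZMod (4*p)) = β (v : ZMod p) := by
          rw [hΘdef, Phi_symm_eval h]
          simp
        have h2 : Θ (((e h).symm (1, v) : (ZMod (4*p))ˣ) : ZMod (4*p)) = 1 := by
          apply eval_eq_one_of_cast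
          have hcmn : Θ.conductor ∣ m' * n' := by rw [hc]
          rw [cast_castHom (hc ▸ dvd_rfl : Θ.conductor ∣ m' * n')
            (hc ▸ Θ.conductor_dvd_level : m' * n' ∣ 4 * p)]
          have hcop : Nat.Coprime m' n' :=
            Nat.Coprime.coprime_dvd_left hm' (Nat.Coprime.coprime_dvd_right hn' h)
          have hmain : ZMod.castHom (hc ▸ Θ.conductor_dvd_level : m' * n' ∣ 4 * p)
              (ZMod (m' * n')) (((e h).symm (1, v) : (ZMod (4*p))ˣ) : ZMod (4*p)) = 1 := by
            apply cast_eq_one_of_crt hcop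
            · rw [cast_castHom hm' (dvd_mul_right 4 p), cast4_symm h, Units.val_one, map_one]
            · rw [cast_castHom hn' (dvd_mul_left p 4), castp_symm h]
              have : ZMod.castHom hn' (ZMod n') (v : ZMod p) = 1 := by
                have := congrArg (Units.val) hv
                simpa [ZMod.unitsMap] using this
              exact this
          rw [hmain, map_one]
        rw [← h1, h2]
      ext
      simpa [MulChar.coe_toUnitHom] using hbv
    calc β.conductor ≤ n' := Nat.sInf_le hfb
      _ ≤ Θ.conductor := Nat.le_of_dvd
          (Nat.pos_of_ne_zero (conductor_ne_zero Θ))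
          ⟨m', by rw [← hc, mul_comm]⟩
  have hccd : Θ.conductor = β.conductor := le_antisymm hcd hdc
  haveI i1 : NeZero Θ.conductor := ⟨conductor_ne_zero Θ⟩
  haveI i2 : NeZero β.conductor := ⟨conductor_ne_zero β⟩
  rw [LOneStar_def, LOneStar_def]
  refine LFun_congr (N := 4*p) hccd (conductor_dvd_level Θ)
    ((conductor_dvd_level β).trans (dvd_mul_left p 4)) ?_ 1
  rw [← eq_changeLevel_primitive Θ, hΘ]
  conv_lhs => rw [eq_changeLevel_primitive β]
  rw [← changeLevel_trans]

lemma prim_ne_one {N : ℕ} [NeZero N] {Θ : DirichletCharacter ℂ N} (hΘ : Θ ≠ 1) :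
    Θ.primitiveCharacter ≠ 1 := by
  intro h1
  apply hΘ
  rw [eq_changeLevel_primitive Θ, h1, changeLevel_one]

lemma primeFactors_4p [hp : Fact p.Prime] (hp2 : p ≠ 2) :
    (4 * p).primeFactors = {2, p} := by
  rw [Nat.primeFactors_mul (by norm_num) hp.out.ne_zero, Nat.Prime.primeFactors hp.out]
  have h4 : (4 : ℕ).primeFactors = {2} := by
    rw [show (4:ℕ) = 2^2 from rfl, Nat.primeFactors_pow 2 (by norm_num),
      Nat.Prime.primeFactors Nat.prime_two]
  rw [h4]
  rfl

lemma LFun_eq_LOneStar_mul [hp : Fact p.Prime] (hp2 : p ≠ 2) {Θ : DirichletCharacter ℂ (4*p)}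
    (hΘ1 : Θ ≠ 1) :
    haveI : NeZero (4*p) := ⟨by simp [hp.out.ne_zero]⟩
    DirichletCharacter.LFunction Θ 1 =
      LOneStar Θ *
        ((1 - Θ.primitiveCharacter ((2 : ℕ) : ZMod Θ.conductor) * (2 : ℂ)⁻¹) *
         (1 - Θ.primitiveCharacter ((p : ℕ) : ZMod Θ.conductor) * (p : ℂ)⁻¹)) := by
  haveI : NeZero p := ⟨hp.out.ne_zero⟩
  haveI : NeZero (4*p) := ⟨by simp [hp.out.ne_zero]⟩
  haveI : NeZero Θ.conductor := ⟨conductor_ne_zero Θ⟩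
  conv_lhs => rw [eq_changeLevel_primitive Θ]
  rw [DirichletCharacter.LFunction_changeLevel _ _ (.inl (prim_ne_one hΘ1))]
  rw [LOneStar_def]
  congr 1
  rw [primeFactors_4p hp2, Finset.prod_pair (by omega : (2:ℕ) ≠ p)]
  have hpow : ∀ q : ℕ, (q : ℂ) ^ (-(1:ℂ)) = (q : ℂ)⁻¹ := by
    intro q
    rw [Complex.cpow_neg, Complex.cpow_one]
  rw [hpow, hpow]
  push_cast
  ring

lemma val2_zero (h : Nat.Coprime 4 p) [NeZero p] {ψ : DirichletCharacter ℂ 4} (hψ : ψ ≠ 1)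
    (χ : DirichletCharacter ℂ p) :
    (Phi (ψ, χ)).primitiveCharacter ((2 : ℕ) : ZMod (Phi (ψ, χ)).conductor) = 0 := by
  apply MulChar.map_nonunit
  rw [ZMod.isUnit_iff_coprime, Nat.Prime.coprime_iff_not_dvd Nat.prime_two]
  exact not_not_intro (dvd_trans (by norm_num : (2:ℕ) ∣ 4) (four_dvd_conductor h hψ χ))

lemma valp_zero (h : Nat.Coprime 4 p) [hp : Fact p.Prime] (ψ : DirichletCharacter ℂ 4)
    {χ : DirichletCharacter ℂ p} (hχ1 : χ ≠ 1) :
    (Phi (ψ, χ)).primitiveCharacter ((p : ℕ) : ZMod (Phi (ψ, χ)).conductor) = 0 := by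
  apply MulChar.map_nonunit
  rw [ZMod.isUnit_iff_coprime, Nat.Prime.coprime_iff_not_dvd hp.out]
  exact fun hcon => hcon (p_dvd_conductor h ψ hχ1)

lemma Phi_psi_one (h : Nat.Coprime 4 p) [NeZero p] (ψ : DirichletCharacter ℂ 4) :
    Phi (ψ, (1 : DirichletCharacter ℂ p)) = changeLevel (dvd_mul_right 4 p) ψ := by
  rw [Phi]
  simp [changeLevel_one]

lemma conductor_Phi_psi_one (h : Nat.Coprime 4 p) [NeZero p] {ψ : DirichletCharacter ℂ 4}
    (hψ : ψ ≠ 1) : (Phi (ψ, (1 : DirichletCharacter ℂ p))).conductor = 4 := by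
  haveI : NeZero (4*p) := ⟨by simp [NeZero.ne p]⟩
  refine Nat.le_antisymm ?_ (Nat.le_of_dvd
    (Nat.pos_of_ne_zero (conductor_ne_zero _)) (four_dvd_conductor h hψ 1))
  exact Nat.sInf_le ⟨dvd_mul_right 4 p, ψ, (Phi_psi_one h ψ).symm ▸ rfl⟩

lemma valp_psi (h : Nat.Coprime 4 p) [NeZero p] {ψ : DirichletCharacter ℂ 4} (hψ : ψ ≠ 1)
    (m : ℕ) :
    (Phi (ψ, (1 : DirichletCharacter ℂ p))).primitiveCharacter
        ((m : ℕ) : ZMod (Phi (ψ, (1 : DirichletCharacter ℂ p))).conductor) =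
      ψ ((m : ℕ) : ZMod 4) := by
  haveI : NeZero (4*p) := ⟨by simp [NeZero.ne p]⟩
  refine eval_congr (N := 4*p) (conductor_Phi_psi_one h hψ)
    (conductor_dvd_level _) (dvd_mul_right 4 p) ?_ m
  rw [← eq_changeLevel_primitive, Phi_psi_one h ψ]

lemma LOneStar_ne_zero {N : ℕ} [NeZero N] {β : DirichletCharacter ℂ N} (hβ : β ≠ 1) :
    LOneStar β ≠ 0 := by
  haveI : NeZero β.conductor := ⟨conductor_ne_zero β⟩
  rw [LOneStar_def]
  exact DirichletCharacter.LFunction_ne_zero_of_one_le_re β.primitiveCharacter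
    (.inl (prim_ne_one hβ)) (by norm_num)

lemma Phi_psi_ne_one (h : Nat.Coprime 4 p) [NeZero p] {ψ : DirichletCharacter ℂ 4}
    (hψ : ψ ≠ 1) (χ : DirichletCharacter ℂ p) : Phi (ψ, χ) ≠ 1 := by
  haveI : NeZero (4*p) := ⟨by simp [NeZero.ne p]⟩
  intro h1
  have := four_dvd_conductor h hψ χ
  rw [h1, conductor_one] at this
  omega

/-- The key per-character evaluation. -/
lemma LFun_Phi_eval (h : Nat.Coprime 4 p) [hp : Fact p.Prime] (hp2 : p ≠ 2)
    {ψ : DirichletCharacter ℂ 4} (hψ : ψ ≠ 1) (χ : DirichletCharacter ℂ p) :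
    haveI : NeZero (4*p) := ⟨by simp [hp.out.ne_zero]⟩
    DirichletCharacter.LFunction (Phi (ψ, χ)) 1 =
      LOneStar (Phi (ψ, χ)) *
        (if χ = 1 then 1 - ψ ((p : ℕ) : ZMod 4) * (p : ℂ)⁻¹ else 1) := by
  haveI : NeZero p := ⟨hp.out.ne_zero⟩
  haveI : NeZero (4*p) := ⟨by simp [hp.out.ne_zero]⟩
  rw [LFun_eq_LOneStar_mul hp2 (Phi_psi_ne_one h hψ χ), val2_zero h hψ χ]
  by_cases hχ1 : χ = 1
  · subst hχ1
    rw [valp_psi h hψ p, if_pos rfl]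
    ring
  · rw [valp_zero h ψ hχ1, if_neg hχ1]
    ring

end S7

open S7 DirichletCharacter

/-- Let `p` be an odd prime and `ψ` the unique nontrivial Dirichlet character mod `4`. Then
`∏_{χ even mod p} L(1, χψ) =
  (∏_{χ odd mod 4p} L(1, χ*) / ∏_{χ odd mod p} L(1, χ*)) · (1 - ψ(p)/p)`. -/
theorem statement7 (p : ℕ) [Fact p.Prime] (hodd : Odd p)
    (ψ : DirichletCharacter ℂ 4) (hψ : ψ ≠ 1) :
    ∏ᶠ (χ : DirichletCharacter ℂ p) (_ : χ.Even),
        DirichletCharacter.LFunction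
          (DirichletCharacter.changeLevel (dvd_mul_left p 4) χ *
            DirichletCharacter.changeLevel (dvd_mul_right 4 p) ψ) 1 =
      (∏ᶠ (χ : DirichletCharacter ℂ (4 * p)) (_ : χ.Odd), LOneStar χ) /
          (∏ᶠ (χ : DirichletCharacter ℂ p) (_ : χ.Odd), LOneStar χ) *
        (1 - ψ ((p : ℕ) : ZMod 4) / (p : ℂ)) := by
  classical
  have hp : Fact p.Prime := inferInstance
  have h2p : ¬ (2 ∣ p) := by rcases hodd with ⟨k, hk⟩; omega
  have h : Nat.Coprime 4 p := Nat.Coprime.pow_left 2 ((Nat.prime_two.coprime_iff_not_dvd).2 h2p)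
  have hp2 : p ≠ 2 := by rintro rfl; exact h2p dvd_rfl
  haveI : NeZero p := ⟨hp.out.ne_zero⟩
  haveI : NeZero (4*p) := ⟨by simp [hp.out.ne_zero]⟩
  letI : Fintype (DirichletCharacter ℂ p) := Fintype.ofFinite _
  letI : Fintype (DirichletCharacter ℂ (4*p)) := Fintype.ofFinite _
  set Se := Finset.univ.filter (fun χ : DirichletCharacter ℂ p => χ.Even) with hSe
  set So := Finset.univ.filter (fun χ : DirichletCharacter ℂ p => χ.Odd) with hSo
  set T := Finset.univ.filter (fun Θ : DirichletCharacter ℂ (4*p) => Θ.Odd) with hT'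
  have humin1 : IsUnit (-1 : ZMod p) := (isUnit_one).neg
  have humin1' : IsUnit (-1 : ZMod 4) := by decide
  -- convert finprods
  have hconv1 : (∏ᶠ (χ : DirichletCharacter ℂ p) (_ : χ.Even),
      DirichletCharacter.LFunction (Phi (ψ, χ)) 1) =
      ∏ χ ∈ Se, DirichletCharacter.LFunction (Phi (ψ, χ)) 1 :=
    finprod_cond_eq_prod_of_cond_iff _ (fun {χ} _ => by simp [hSe])
  have hconv2 : (∏ᶠ (Θ : DirichletCharacter ℂ (4 * p)) (_ : Θ.Odd), LOneStar Θ) =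
      ∏ Θ ∈ T, LOneStar Θ :=
    finprod_cond_eq_prod_of_cond_iff _ (fun {Θ} _ => by simp [hT'])
  have hconv3 : (∏ᶠ (χ : DirichletCharacter ℂ p) (_ : χ.Odd), LOneStar χ) =
      ∏ χ ∈ So, LOneStar χ :=
    finprod_cond_eq_prod_of_cond_iff _ (fun {χ} _ => by simp [hSo])
  -- the decomposition of T
  have hinj1 : ∀ β ∈ So, ∀ β' ∈ So, Phi (1, β) = Phi (1, β') → β = β' := by
    intro β _ β' _ hq
    have := Phi_injective h hq
    exact (Prod.mk.injEq _ _ _ _).mp this |>.2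
  have hinj2 : ∀ χ ∈ Se, ∀ χ' ∈ Se, Phi (ψ, χ) = Phi (ψ, χ') → χ = χ' := by
    intro χ _ χ' _ hq
    have := Phi_injective h hq
    exact (Prod.mk.injEq _ _ _ _).mp this |>.2
  have hTdecomp : T = So.image (fun β => Phi (1, β)) ∪ Se.image (fun χ => Phi (ψ, χ)) := by
    ext Θ
    simp only [hT', hSo, hSe, Finset.mem_union, Finset.mem_image, Finset.mem_filter,
      Finset.mem_univ, true_and]
    constructor
    · intro hΘ
      obtain ⟨⟨α, β⟩, rfl⟩ := Phi_surjective h Θ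
      have hval := Phi_neg_one (α, β)
      rcases alpha_cases hψ α with rfl | rfl
      · left
        refine ⟨β, ?_, rfl⟩
        rw [DirichletCharacter.Odd] at hΘ ⊢
        rw [hval, MulChar.one_apply humin1'] at hΘ
        simpa using hΘ
      · right
        refine ⟨β, ?_, rfl⟩
        rw [DirichletCharacter.Odd] at hΘ
        rw [hval, psi_odd hψ] at hΘ
        have : β (-1 : ZMod p) = 1 := by
          have := hΘ
          field_simp at this
          linear_combination -this
        exact this
    · rintro (⟨β, hβ, rfl⟩ | ⟨χ, hχ, rfl⟩)
      · show (Phi (1, β)) (-1) = -1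
        rw [Phi_neg_one, MulChar.one_apply humin1', one_mul]
        exact hβ
      · show (Phi (ψ, χ)) (-1) = -1
        rw [Phi_neg_one, psi_odd hψ, hχ]
        ring
  have hdisj : Disjoint (So.image (fun β => Phi (1, β))) (Se.image (fun χ => Phi (ψ, χ))) := by
    rw [Finset.disjoint_left]
    rintro Θ h1 h2
    simp only [Finset.mem_image] at h1 h2
    obtain ⟨β, _, hβ⟩ := h1
    obtain ⟨χ, _, hχ⟩ := h2
    have := Phi_injective h (hβ.trans hχ.symm)
    exact hψ ((Prod.mk.injEq _ _ _ _).mp this).1.symm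
  have step1 : (∏ Θ ∈ T, LOneStar Θ) =
      (∏ β ∈ So, LOneStar (Phi (1, β))) * ∏ χ ∈ Se, LOneStar (Phi (ψ, χ)) := by
    rw [hTdecomp, Finset.prod_union hdisj, Finset.prod_image hinj1, Finset.prod_image hinj2]
  have step2 : (∏ β ∈ So, LOneStar (Phi (1, β))) = ∏ β ∈ So, LOneStar β :=
    Finset.prod_congr rfl (fun β _ => LOneStar_Phi_one h β)
  have step3 : (∏ χ ∈ Se, DirichletCharacter.LFunction (Phi (ψ, χ)) 1) =
      (∏ χ ∈ Se, LOneStar (Phi (ψ, χ))) * (1 - ψ ((p : ℕ) : ZMod 4) * (p : ℂ)⁻¹) := by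
    rw [Finset.prod_congr rfl (fun χ _ => LFun_Phi_eval h hp2 hψ χ), Finset.prod_mul_distrib]
    congr 1
    have h1mem : (1 : DirichletCharacter ℂ p) ∈ Se := by
      simp only [hSe, Finset.mem_filter, Finset.mem_univ, true_and]
      show (1 : DirichletCharacter ℂ p) (-1) = 1
      exact MulChar.one_apply humin1
    rw [Finset.prod_eq_single_of_mem 1 h1mem (fun b _ hb => if_neg hb), if_pos rfl]
  have hB : (∏ β ∈ So, LOneStar β) ≠ 0 := by
    rw [Finset.prod_ne_zero_iff]
    intro β hβ
    refine LOneStar_ne_zero ?_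
    rintro rfl
    simp only [hSo, Finset.mem_filter, Finset.mem_univ, true_and] at hβ
    rw [DirichletCharacter.Odd, MulChar.one_apply humin1] at hβ
    norm_num at hβ
  calc ∏ᶠ (χ : DirichletCharacter ℂ p) (_ : χ.Even),
        DirichletCharacter.LFunction
          (DirichletCharacter.changeLevel (dvd_mul_left p 4) χ *
            DirichletCharacter.changeLevel (dvd_mul_right 4 p) ψ) 1
      = ∏ χ ∈ Se, DirichletCharacter.LFunction (Phi (ψ, χ)) 1 := hconv1
    _ = (∏ χ ∈ Se, LOneStar (Phi (ψ, χ))) * (1 - ψ ((p : ℕ) : ZMod 4) * (p : ℂ)⁻¹) := step3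
    _ = (∏ᶠ (χ : DirichletCharacter ℂ (4 * p)) (_ : χ.Odd), LOneStar χ) /
          (∏ᶠ (χ : DirichletCharacter ℂ p) (_ : χ.Odd), LOneStar χ) *
        (1 - ψ ((p : ℕ) : ZMod 4) / (p : ℂ)) := by
        rw [hconv2, hconv3, step1, step2,
          mul_comm (∏ β ∈ So, LOneStar β) (∏ χ ∈ Se, LOneStar (Phi (ψ, χ))),
          mul_div_assoc, div_self hB, mul_one, div_eq_mul_inv]
end

section
/- Let p be an odd prime and let ℓ be the multiplicative order of 4 in (ℤ/pℤ)^×. Then ∏_{χ even mod p} χ(4) = 1 if 4 ∤ ℓ, and ∏_{χ even mod p} χ(4) = (−1)^{(p−1)/ℓ} if 4 ∣ ℓ, where the product runs over all even Dirichlet characters modulo p. -/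
open Finset

/-- The product over all even Dirichlet characters mod `p` of `χ 4` is `1`. -/
lemma prod_even_chars_four (p : ℕ) [Fact p.Prime] (hodd : Odd p) :
    ∏ᶠ (χ : DirichletCharacter ℂ p) (_ : χ.Even), χ 4 = 1 := by
  classical
  haveI : Finite (DirichletCharacter ℂ p) := inferInstance
  haveI : Fintype (DirichletCharacter ℂ p) := Fintype.ofFinite _
  have h2 : (2 : ZMod p) ≠ 0 := by
    have := (Fact.out : p.Prime)
    intro h
    have hpd : (p : ℕ) ∣ 2 := (ZMod.natCast_eq_zero_iff 2 p).mp (by exact_mod_cast h)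
    have h1 := Nat.le_of_dvd (by norm_num) hpd
    have h2 := (Fact.out : p.Prime).two_le
    obtain ⟨k, hk⟩ := hodd
    omega
  have key : ∏ᶠ (χ : DirichletCharacter ℂ p) (_ : χ.Even), χ 4
      = ∏ χ ∈ univ.filter (fun χ : DirichletCharacter ℂ p => χ.Even), χ 4 := by
    refine finprod_cond_eq_prod_of_cond_iff _ ?_
    intro χ _
    simp [Finset.mem_filter]
  rw [key]
  set E := univ.filter (fun χ : DirichletCharacter ℂ p => χ.Even) with hE
  have h4 : (4 : ZMod p) = 2 ^ 2 := by norm_num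
  have step1 : ∏ χ ∈ E, χ 4 = (∏ χ ∈ E, χ 2) ^ 2 := by
    rw [← prod_pow]
    refine Finset.prod_congr rfl fun χ _ => ?_
    rw [h4, map_pow]
  have inv_mem : ∀ χ : DirichletCharacter ℂ p, χ ∈ E → χ⁻¹ ∈ E := by
    intro χ hχ
    simp only [hE, mem_filter, mem_univ, true_and] at hχ ⊢
    unfold DirichletCharacter.Even at hχ ⊢
    rw [MulChar.inv_apply, Ring.inverse_eq_inv]
    rw [inv_neg_one]
    exact hχ
  have step2 : ∏ χ ∈ E, χ 2 = ∏ χ ∈ E, χ⁻¹ 2 := by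
    refine Finset.prod_nbij' (fun χ => χ⁻¹) (fun χ => χ⁻¹) inv_mem inv_mem ?_ ?_ ?_ <;>
      simp
  have step3 : ∀ χ : DirichletCharacter ℂ p, χ 2 * χ⁻¹ 2 = 1 := by
    intro χ
    rw [MulChar.inv_apply, Ring.inverse_eq_inv, ← map_mul]
    rw [mul_inv_cancel₀ h2, map_one]
  calc ∏ χ ∈ E, χ 4 = (∏ χ ∈ E, χ 2) ^ 2 := step1
    _ = (∏ χ ∈ E, χ 2) * (∏ χ ∈ E, χ⁻¹ 2) := by rw [sq, step2]
    _ = ∏ χ ∈ E, (χ 2 * χ⁻¹ 2) := by rw [← Finset.prod_mul_distrib]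
    _ = 1 := by simp [step3]

/-- Let `p` be an odd prime and `ℓ` the multiplicative order of `4` in `(ℤ/pℤ)ˣ`. Then
`∏_{χ even mod p} χ(4) = 1` if `4 ∤ ℓ`, and `∏_{χ even mod p} χ(4) = (-1)^{(p-1)/ℓ}`
if `4 ∣ ℓ`. -/
theorem statement9 (p : ℕ) [Fact p.Prime] (hodd : Odd p)
    (ℓ : ℕ) (hℓ : ℓ = orderOf (4 : ZMod p)) :
    (¬ (4 ∣ ℓ) →
      ∏ᶠ (χ : DirichletCharacter ℂ p) (_ : χ.Even), χ 4 = 1) ∧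
    ((4 ∣ ℓ) →
      ∏ᶠ (χ : DirichletCharacter ℂ p) (_ : χ.Even), χ 4 = (-1) ^ ((p - 1) / ℓ)) := by
  have hp := (Fact.out : p.Prime)
  have hmain := prod_even_chars_four p hodd
  refine ⟨fun _ => hmain, fun hdvd => ?_⟩
  rw [hmain]
  -- It remains to show `(-1 : ℂ)^((p-1)/ℓ) = 1`, i.e. the exponent is even.
  have h2 : (2 : ZMod p) ≠ 0 := by
    intro h
    have hpd : (p : ℕ) ∣ 2 := (ZMod.natCast_eq_zero_iff 2 p).mp (by exact_mod_cast h)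
    have h1 := Nat.le_of_dvd (by norm_num) hpd
    have h2 := hp.two_le
    obtain ⟨k, hk⟩ := hodd
    omega
  have hp1 : 0 < p - 1 := by
    have := hp.two_le
    omega
  have hpow2 : (2 : ZMod p) ^ (p - 1) = 1 := ZMod.pow_card_sub_one_eq_one h2
  have hd_dvd : orderOf (2 : ZMod p) ∣ p - 1 := orderOf_dvd_of_pow_eq_one hpow2
  set d := orderOf (2 : ZMod p) with hd
  have hℓd : ℓ = d / Nat.gcd d 2 := by
    rw [hℓ, show (4 : ZMod p) = 2 ^ 2 by norm_num, orderOf_pow' _ (by norm_num)]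
  have hdpos : 0 < d := by
    refine orderOf_pos_iff.mpr ?_
    exact isOfFinOrder_iff_pow_eq_one.mpr ⟨p - 1, hp1, hpow2⟩
  have hℓeven : 2 ∣ ℓ := dvd_trans (by norm_num) hdvd
  have hdeven : 2 ∣ d := by
    by_contra hodd'
    have : Nat.gcd d 2 = 1 := by
      rw [Nat.gcd_comm]
      exact Nat.Coprime.gcd_eq_one (Nat.coprime_two_left.mpr (Nat.odd_iff.mpr (by omega)))
    rw [this, Nat.div_one] at hℓd
    omega
  have hd2ℓ : d = 2 * ℓ := by
    have : Nat.gcd d 2 = 2 := Nat.gcd_eq_right hdeven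
    rw [hℓd, this]
    omega
  obtain ⟨t, ht⟩ : d ∣ p - 1 := hd_dvd
  have hℓpos : 0 < ℓ := by omega
  have hquot : (p - 1) / ℓ = 2 * t := by
    rw [ht, hd2ℓ]
    rw [show 2 * ℓ * t = ℓ * (2 * t) by ring]
    exact Nat.mul_div_cancel_left _ hℓpos
  rw [hquot]
  exact (Even.neg_one_pow (even_two_mul t)).symm
end

section
/- Let p be a prime with p ≡ 1 (mod 4). Then det[(sec(2πjk/p))_{0 ≤ j,k ≤ (p−1)/2}] = 0. -/
open scoped Real

namespace S11

open Finset

variable {p : ℕ}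

noncomputable def ζ (p : ℕ) : ℂ := Complex.exp (2 * π * Complex.I / p)
noncomputable def G (p : ℕ) (a : ZMod p) : ℝ := (Real.cos (2 * π * a.val / p))⁻¹
noncomputable def w (p : ℕ) (a : ZMod p) : ℂ := ζ p ^ a.val

set_option linter.unusedSectionVars false

section Basic
variable (hp : p.Prime) (h1 : p % 4 = 1)
include hp h1

lemma p5 : 5 ≤ p := by have := hp.two_le; omega

lemma hp0R : (p : ℝ) ≠ 0 := by
  have := p5 hp h1; positivity

lemma cos_ne (n : ℕ) : Real.cos (2 * π * n / p) ≠ 0 := by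
  intro h
  rw [Real.cos_eq_zero_iff] at h
  obtain ⟨k, hk⟩ := h
  have hp0 : (p : ℝ) ≠ 0 := hp0R hp h1
  have hπ : (π : ℝ) ≠ 0 := Real.pi_ne_zero
  have h4' : (4 * (n : ℝ)) = ((2 * k + 1) * (p : ℝ)) := by
    have h4 : (4 * (n : ℝ)) * π = ((2 * k + 1) * (p : ℝ)) * π := by
      field_simp at hk
      linear_combination π * hk
    exact mul_right_cancel₀ hπ h4
  have h4'' : (4 * (n : ℤ)) = (2 * k + 1) * (p : ℤ) := by exact_mod_cast h4'
  have hodd : Odd ((2 * k + 1) * (p : ℤ)) := by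
    refine (odd_two_mul_add_one k).mul ?_
    have h2 : p % 2 = 1 := by omega
    exact (Int.odd_coe_nat p).mpr (Nat.odd_iff.mpr h2)
  rw [← h4''] at hodd
  rcases hodd with ⟨m, hm⟩
  omega

lemma hζ : IsPrimitiveRoot (ζ p) p :=
  Complex.isPrimitiveRoot_exp p (by have := p5 hp h1; omega)

lemma zeta_ne : ζ p ≠ 0 := Complex.exp_ne_zero _

lemma zeta_pow_mod (n : ℕ) : ζ p ^ n = ζ p ^ (n % p) := by
  conv_lhs => rw [← Nat.div_add_mod n p]
  rw [pow_add, pow_mul, (hζ hp h1).pow_eq_one, one_pow, one_mul]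

end Basic

section Main
variable [NeZero p] (hp : p.Prime) (h1 : p % 4 = 1)
include hp h1

lemma w_natCast (n : ℕ) : w p (n : ZMod p) = ζ p ^ n := by
  rw [w, ZMod.val_natCast, ← zeta_pow_mod hp h1]

lemma w_ne_zero (a : ZMod p) : w p a ≠ 0 := pow_ne_zero _ (zeta_ne hp h1)

lemma w_add (a b : ZMod p) : w p (a + b) = w p a * w p b := by
  rw [w, w, w, ZMod.val_add, ← zeta_pow_mod hp h1, pow_add]

lemma w_zero : w p 0 = 1 := by
  simp [w, ZMod.val_zero]

lemma w_neg (a : ZMod p) : w p (-a) = (w p a)⁻¹ := by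
  have h : w p (-a) * w p a = 1 := by
    rw [← w_add hp h1, neg_add_cancel, w_zero hp h1]
  exact eq_inv_of_mul_eq_one_left h

lemma w_pow (a : ZMod p) (n : ℕ) : w p a ^ n = w p ((n : ZMod p) * a) := by
  rw [w, w, ← pow_mul, zeta_pow_mod hp h1 (a.val * n)]
  congr 1
  rw [ZMod.val_mul, ZMod.val_natCast]
  rw [Nat.mod_mul_mod, Nat.mul_comm n a.val]

lemma w_ne_neg_one (a : ZMod p) : w p a ≠ -1 := by
  intro h
  have h2 : ζ p ^ (a.val * 2) = 1 := by
    rw [pow_mul]; rw [w] at h; rw [h]; ring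
  rw [(hζ hp h1).pow_eq_one_iff_dvd] at h2
  have hnd : ¬ p ∣ 2 := by
    intro hd
    have := Nat.le_of_dvd (by norm_num) hd
    have := p5 hp h1; omega
  have hcop : Nat.Coprime p 2 := (Nat.Prime.coprime_iff_not_dvd hp).mpr hnd
  have hdvd : p ∣ a.val := hcop.dvd_of_dvd_mul_right h2
  have hlt : a.val < p := ZMod.val_lt a
  have h0 : a.val = 0 := Nat.eq_zero_of_dvd_of_lt hdvd hlt
  rw [w, h0, pow_zero] at h
  norm_num at h

lemma one_add_w_ne (a : ZMod p) : 1 + w p a ≠ 0 := by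
  intro h
  exact w_ne_neg_one hp h1 a (by linear_combination h)

lemma sum_w : ∑ a : ZMod p, w p a = 0 := by
  have h : ∑ a : ZMod p, w p a = ∑ k ∈ range p, ζ p ^ k := by
    refine sum_nbij' (fun a => a.val) (fun k => (k : ZMod p)) ?_ ?_ ?_ ?_ ?_
    · intro a _; exact mem_range.mpr (ZMod.val_lt a)
    · intro k _; exact mem_univ _
    · intro a _; exact ZMod.natCast_zmod_val a
    · intro k hk; exact ZMod.val_cast_of_lt (mem_range.mp hk)
    · intro a _; rfl
  rw [h, (hζ hp h1).geom_sum_eq_zero (by have := p5 hp h1; omega)]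

lemma ne_zero_cast {i : ℕ} (h0 : 0 < i) (hip : i < p) : (i : ZMod p) ≠ 0 := by
  intro h
  rw [ZMod.natCast_eq_zero_iff] at h
  have := Nat.le_of_dvd h0 h
  omega

lemma sum_w_pow {i : ℕ} (h0 : 0 < i) (hip : i < p) : ∑ a : ZMod p, w p a ^ i = 0 := by
  haveI : Fact p.Prime := ⟨hp⟩
  simp_rw [w_pow hp h1]
  have hc : (i : ZMod p) ≠ 0 := ne_zero_cast hp h1 h0 hip
  rw [show (∑ a : ZMod p, w p ((i : ZMod p) * a))
      = ∑ a : ZMod p, w p ((Equiv.mulLeft₀ (i : ZMod p) hc) a) from rfl]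
  rw [Equiv.sum_comp (Equiv.mulLeft₀ (i : ZMod p) hc) (w p)]
  exact sum_w hp h1

lemma sum_inv_one_add : ∑ a : ZMod p, (1 + w p a)⁻¹ = (p : ℂ) / 2 := by
  have key : ∀ a : ZMod p, (1 + w p a)⁻¹ + (1 + w p (-a))⁻¹ = 1 := by
    intro a
    rw [w_neg hp h1]
    have h1' : 1 + w p a ≠ 0 := one_add_w_ne hp h1 a
    have h0 : w p a ≠ 0 := w_ne_zero hp h1 a
    have hw : 1 + (w p a)⁻¹ = (1 + w p a) / w p a := by
      field_simp
      ring
    rw [hw, inv_div, inv_eq_one_div, ← add_div]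
    rw [div_eq_one_iff_eq h1']
  have h2 : (2 : ℂ) * ∑ a : ZMod p, (1 + w p a)⁻¹ = p := by
    have hre : ∑ a : ZMod p, (1 + w p (-a))⁻¹ = ∑ a : ZMod p, (1 + w p a)⁻¹ :=
      Equiv.sum_comp (Equiv.neg (ZMod p)) (fun a => (1 + w p a)⁻¹)
    have hs := Finset.sum_congr rfl (fun a (_ : a ∈ (univ : Finset (ZMod p))) => key a)
    rw [Finset.sum_add_distrib, hre] at hs
    simp only [Finset.sum_const, card_univ, ZMod.card, nsmul_eq_mul, mul_one] at hs
    linear_combination hs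
  have h2' : (2 : ℂ) ≠ 0 := by norm_num
  rw [eq_div_iff h2']
  linear_combination h2

lemma sum_main : ∑ a : ZMod p, 2 * w p a / (w p a ^ 2 + 1) = (p : ℂ) := by
  haveI : Fact p.Prime := ⟨hp⟩
  have h5 := p5 hp h1
  set e : ℕ := (p + 1) / 2 with he
  have hce : (e : ZMod p) ≠ 0 := ne_zero_cast hp h1 (by omega) (by omega)
  have hre : ∑ a : ZMod p, 2 * w p a / (w p a ^ 2 + 1)
      = ∑ a : ZMod p, 2 * w p ((e : ZMod p) * a) / (w p ((e : ZMod p) * a) ^ 2 + 1) :=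
    (Equiv.sum_comp (Equiv.mulLeft₀ (e : ZMod p) hce)
      (fun z => 2 * w p z / (w p z ^ 2 + 1))).symm
  rw [hre]
  have hterm : ∀ a : ZMod p, 2 * w p ((e : ZMod p) * a) / (w p ((e : ZMod p) * a) ^ 2 + 1)
      = 2 * (∑ i ∈ range e, (w p a) ^ i * (-1 : ℂ) ^ (e - 1 - i))
        + 2 * (-1 : ℂ) ^ e * (1 + w p a)⁻¹ := by
    intro a
    have h1e : w p ((e : ZMod p) * a) = w p a ^ e := (w_pow hp h1 a e).symm
    have h2e : w p ((e : ZMod p) * a) ^ 2 = w p a := by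
      rw [h1e, ← pow_mul, w_pow hp h1]
      have hc2 : ((e * 2 : ℕ) : ZMod p) = 1 := by
        have h' : e * 2 = p + 1 := by omega
        rw [h']; push_cast; simp
      rw [hc2, one_mul]
    have hne : 1 + w p a ≠ 0 := one_add_w_ne hp h1 a
    have hne' : w p a + 1 ≠ 0 := fun h => hne (by linear_combination h)
    rw [h2e, h1e]
    have hgeom := geom_sum₂_mul (w p a) (-1 : ℂ) e
    rw [div_eq_iff hne']
    have hinv : (1 + w p a)⁻¹ * (w p a + 1) = 1 := by
      rw [add_comm (w p a) 1]; exact inv_mul_cancel₀ hne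
    linear_combination (-2 : ℂ) * hgeom + (-2 : ℂ) * (-1 : ℂ) ^ e * hinv
  simp_rw [hterm]
  rw [Finset.sum_add_distrib]
  have hA : ∑ a : ZMod p, 2 * (∑ i ∈ range e, (w p a) ^ i * (-1 : ℂ) ^ (e - 1 - i))
      = 2 * ((-1 : ℂ) ^ (e - 1) * p) := by
    simp_rw [Finset.mul_sum]
    rw [Finset.sum_comm]
    have hs : ∀ i ∈ range e, ∑ a : ZMod p, 2 * ((w p a) ^ i * (-1 : ℂ) ^ (e - 1 - i))
        = if i = 0 then 2 * ((-1 : ℂ) ^ (e - 1) * p) else 0 := by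
      intro i hi
      rw [mem_range] at hi
      by_cases h0 : i = 0
      · subst h0
        rw [if_pos rfl]
        simp only [pow_zero, one_mul, Nat.sub_zero]
        rw [Finset.sum_const, card_univ, ZMod.card, nsmul_eq_mul]
        ring
      · rw [if_neg h0]
        have hz : ∑ a : ZMod p, (w p a) ^ i = 0 :=
          sum_w_pow hp h1 (Nat.pos_of_ne_zero h0) (by omega)
        calc ∑ a : ZMod p, 2 * ((w p a) ^ i * (-1 : ℂ) ^ (e - 1 - i))
            = (∑ a : ZMod p, (w p a) ^ i) * (2 * (-1 : ℂ) ^ (e - 1 - i)) := by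
              rw [Finset.sum_mul]; exact Finset.sum_congr rfl fun a _ => by ring
          _ = 0 := by rw [hz, zero_mul]
    rw [Finset.sum_congr rfl hs, Finset.sum_ite_eq' (range e) 0
      (fun _ => 2 * ((-1 : ℂ) ^ (e - 1) * p))]
    rw [if_pos (mem_range.mpr (by omega))]
  have hB : ∑ a : ZMod p, 2 * (-1 : ℂ) ^ e * (1 + w p a)⁻¹
      = 2 * (-1 : ℂ) ^ e * ((p : ℂ) / 2) := by
    rw [← Finset.mul_sum, sum_inv_one_add hp h1]
  rw [hA, hB]
  have heo : e % 2 = 1 := by omega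
  have h1' : (-1 : ℂ) ^ e = -1 := Odd.neg_one_pow ⟨e / 2, by omega⟩
  have h2' : (-1 : ℂ) ^ (e - 1) = 1 := Even.neg_one_pow ⟨(e - 1) / 2, by omega⟩
  rw [h1', h2']
  ring

lemma sec_complex' (n : ℕ) :
    (((Real.cos (2 * π * n / p))⁻¹ : ℝ) : ℂ) = 2 * ζ p ^ n / ((ζ p ^ n) ^ 2 + 1) := by
  have hz : ζ p ^ n = Complex.exp (((2 * π * n / p : ℝ) : ℂ) * Complex.I) := by
    rw [ζ, ← Complex.exp_nat_mul]
    congr 1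
    push_cast
    ring
  have hzne : ζ p ^ n ≠ 0 := pow_ne_zero _ (zeta_ne hp h1)
  have hc0 : Complex.cos ((2 * π * n / p : ℝ) : ℂ) ≠ 0 := by
    rw [← Complex.ofReal_cos]
    exact Complex.ofReal_ne_zero.mpr (cos_ne hp h1 n)
  have hkey : (ζ p ^ n) ^ 2 + 1 = 2 * ζ p ^ n * Complex.cos ((2 * π * n / p : ℝ) : ℂ) := by
    rw [Complex.cos, neg_mul, Complex.exp_neg, ← hz]
    field_simp
  rw [Complex.ofReal_inv, Complex.ofReal_cos, hkey]
  rw [eq_div_iff (mul_ne_zero (mul_ne_zero two_ne_zero hzne) hc0)]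
  rw [inv_mul_eq_div, mul_div_assoc, div_self hc0, mul_one]

lemma sum_G : ∑ a : ZMod p, G p a = (p : ℝ) := by
  have h2 : ((∑ a : ZMod p, G p a : ℝ) : ℂ) = ((p : ℕ) : ℂ) := by
    push_cast
    calc ∑ a : ZMod p, ((G p a : ℝ) : ℂ)
        = ∑ a : ZMod p, 2 * w p a / (w p a ^ 2 + 1) := by
          refine Finset.sum_congr rfl fun a _ => ?_
          rw [G]
          exact sec_complex' hp h1 a.val
      _ = (p : ℂ) := sum_main hp h1
  exact_mod_cast h2

lemma G_zero : G p 0 = 1 := by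
  simp [G, ZMod.val_zero]

lemma G_neg (a : ZMod p) : G p (-a) = G p a := by
  by_cases h : a = 0
  · subst h; rw [neg_zero]
  · haveI : NeZero a := ⟨h⟩
    rw [G, G, ZMod.val_neg_of_ne_zero]
    have hv : ((p - a.val : ℕ) : ℝ) = (p : ℝ) - a.val :=
      Nat.cast_sub (le_of_lt (ZMod.val_lt a))
    rw [hv]
    have hp0 : (p : ℝ) ≠ 0 := hp0R hp h1
    have harg : 2 * π * ((p : ℝ) - a.val) / p = 2 * π - 2 * π * a.val / p := by
      field_simp
    rw [harg, Real.cos_two_pi_sub]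

lemma G_natCast (n : ℕ) : G p ((n : ZMod p)) = (Real.cos (2 * π * n / p))⁻¹ := by
  rw [G, ZMod.val_natCast]
  congr 1
  have hp0 : (p : ℝ) ≠ 0 := hp0R hp h1
  have hsplit : 2 * π * (n : ℝ) / p = 2 * π * ((n % p : ℕ) : ℝ) / p + (n / p : ℕ) * (2 * π) := by
    have hn : ((n : ℝ)) = (p : ℝ) * ((n / p : ℕ) : ℝ) + ((n % p : ℕ) : ℝ) := by
      exact_mod_cast (Nat.div_add_mod n p).symm
    rw [hn]
    field_simp
    ring
  rw [hsplit, Real.cos_add_nat_mul_two_pi]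

lemma key_row (u : ZMod p) (hu : u ≠ 0) :
    ∑ k ∈ Ico 1 ((p + 1) / 2), G p (u * (k : ZMod p)) = ((p : ℝ) - 1) / 2 := by
  haveI : Fact p.Prime := ⟨hp⟩
  have h5 := p5 hp h1
  set e : ℕ := (p + 1) / 2 with he
  have full : ∑ k ∈ Ico 1 p, G p (u * (k : ZMod p)) = (p : ℝ) - 1 := by
    have hbij : ∑ k ∈ Ico 1 p, G p (u * (k : ZMod p))
        = ∑ a ∈ (univ : Finset (ZMod p)).erase 0, G p a := by
      refine sum_nbij' (fun k => u * (k : ZMod p)) (fun a => (u⁻¹ * a).val) ?_ ?_ ?_ ?_ ?_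
      · intro k hk
        rw [mem_Ico] at hk
        exact mem_erase.mpr ⟨mul_ne_zero hu (ne_zero_cast hp h1 (by omega) (by omega)), mem_univ _⟩
      · intro a ha
        rw [mem_erase] at ha
        rw [mem_Ico]
        have hne : u⁻¹ * a ≠ 0 := mul_ne_zero (inv_ne_zero hu) ha.1
        have hv : (u⁻¹ * a).val ≠ 0 := fun h => hne ((ZMod.val_eq_zero _).mp h)
        exact ⟨Nat.one_le_iff_ne_zero.mpr hv, ZMod.val_lt _⟩
      · intro k hk
        rw [mem_Ico] at hk
        have h' : u⁻¹ * (u * (k : ZMod p)) = (k : ZMod p) := by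
          rw [← mul_assoc, inv_mul_cancel₀ hu, one_mul]
        rw [h', ZMod.val_cast_of_lt hk.2]
      · intro a ha
        rw [ZMod.natCast_zmod_val, ← mul_assoc, mul_inv_cancel₀ hu, one_mul]
      · intro k _; rfl
    rw [hbij]
    have hsplit : G p 0 + ∑ a ∈ (univ : Finset (ZMod p)).erase 0, G p a
        = ∑ a : ZMod p, G p a := Finset.add_sum_erase _ _ (mem_univ 0)
    rw [sum_G hp h1, G_zero hp h1] at hsplit
    linarith
  have hrefl : ∑ k ∈ Ico e p, G p (u * (k : ZMod p)) = ∑ k ∈ Ico 1 e, G p (u * (k : ZMod p)) := by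
    refine sum_nbij' (fun k => p - k) (fun k => p - k) ?_ ?_ ?_ ?_ ?_
    · intro k hk; simp only [mem_Ico] at hk ⊢; omega
    · intro k hk; simp only [mem_Ico] at hk ⊢; omega
    · intro k hk; simp only [mem_Ico] at hk; omega
    · intro k hk; simp only [mem_Ico] at hk; omega
    · intro k hk
      simp only [mem_Ico] at hk
      have hc : ((p - k : ℕ) : ZMod p) = -(k : ZMod p) := by
        rw [Nat.cast_sub (le_of_lt hk.2), ZMod.natCast_self, zero_sub]
      rw [hc, mul_neg, G_neg hp h1]
  have hcons : (∑ k ∈ Ico 1 e, G p (u * (k : ZMod p)))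
      + ∑ k ∈ Ico e p, G p (u * (k : ZMod p)) = ∑ k ∈ Ico 1 p, G p (u * (k : ZMod p)) :=
    sum_Ico_consecutive _ (by omega) (by omega)
  rw [hrefl, full] at hcons
  linarith

end Main

end S11

open Finset in
/-- Let `p` be a prime with `p ≡ 1 (mod 4)`. Then
`det[(sec(2πjk/p))_{0 ≤ j,k ≤ (p-1)/2}] = 0`. -/
theorem statement11 (p : ℕ) (hp : p.Prime) (h1 : p % 4 = 1) :
    Matrix.det (Matrix.of fun j k : Fin ((p + 1) / 2) =>
      (Real.cos (2 * π * (j : ℕ) * (k : ℕ) / p))⁻¹) = 0 := by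
  have h5 := S11.p5 hp h1
  haveI : NeZero ((p + 1) / 2) := ⟨by omega⟩
  haveI : NeZero p := ⟨by omega⟩
  rw [← Matrix.exists_mulVec_eq_zero_iff]
  refine ⟨fun k => if k = 0 then ((p : ℝ) - 1) / 2 else -1, ?_, ?_⟩
  · intro hv
    have h0 := congrFun hv 0
    rw [Pi.zero_apply] at h0
    rw [if_pos rfl] at h0
    have h5' : (5 : ℝ) ≤ p := by exact_mod_cast h5
    linarith
  · funext j
    have hrow : ∑ m ∈ Ico 1 ((p + 1) / 2), (Real.cos (2 * π * (j : ℕ) * m / p))⁻¹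
        = ((p : ℝ) - 1) / 2 := by
      by_cases hj : ((j : ℕ)) = 0
      · have hconst : ∀ m ∈ Ico 1 ((p + 1) / 2),
            (Real.cos (2 * π * (j : ℕ) * m / p))⁻¹ = 1 := by
          intro m _
          rw [hj]
          norm_num
        rw [Finset.sum_congr rfl hconst, Finset.sum_const, Nat.card_Ico, nsmul_eq_mul, mul_one]
        have h2 : ((p + 1) / 2 - 1) * 2 = p - 1 := by omega
        have h3 : (((p + 1) / 2 - 1 : ℕ) : ℝ) * 2 = (p : ℝ) - 1 := by
          have h4 := congrArg (Nat.cast : ℕ → ℝ) h2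
          push_cast [Nat.cast_sub (show 1 ≤ (p + 1) / 2 by omega),
            Nat.cast_sub (show 1 ≤ p by omega)] at h4 ⊢
          linarith
        linarith
      · have hu : ((j : ℕ) : ZMod p) ≠ 0 :=
          S11.ne_zero_cast hp h1 (Nat.pos_of_ne_zero hj) (lt_of_lt_of_le j.isLt (by omega))
        have hk := S11.key_row hp h1 ((j : ℕ) : ZMod p) hu
        rw [← hk]
        refine Finset.sum_congr rfl fun m hm => ?_
        rw [show ((j : ℕ) : ZMod p) * ((m : ℕ) : ZMod p) = (((j : ℕ) * m : ℕ) : ZMod p) by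
          push_cast; ring]
        rw [S11.G_natCast hp h1]
        congr 2
        push_cast
        ring
    show _ = (0 : Fin ((p + 1) / 2) → ℝ) j
    simp only [Matrix.mulVec, dotProduct, Matrix.of_apply, Pi.zero_apply]
    set F : ℕ → ℝ := fun m => (Real.cos (2 * π * (j : ℕ) * m / p))⁻¹
        * (if m = 0 then ((p : ℝ) - 1) / 2 else -1) with hF
    have hite : ∀ k : Fin ((p + 1) / 2),
        (Real.cos (2 * π * (j : ℕ) * (k : ℕ) / p))⁻¹ * (if k = 0 then ((p : ℝ) - 1) / 2 else -1)
        = F (k : ℕ) := by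
      intro k
      rw [hF]
      dsimp only
      congr 1
      by_cases hk : k = 0
      · subst hk; simp
      · rw [if_neg hk, if_neg (by
          intro h
          exact hk (Fin.ext (by simpa using h)))]
    rw [Finset.sum_congr rfl fun k _ => hite k]
    rw [Fin.sum_univ_eq_sum_range F ((p + 1) / 2)]
    rw [Finset.range_eq_Ico, Finset.sum_eq_sum_Ico_succ_bot (show 0 < (p + 1) / 2 by omega)]
    have hF0 : F 0 = ((p : ℝ) - 1) / 2 := by
      rw [hF]
      norm_num
    have hFm : ∀ m ∈ Ico 1 ((p + 1) / 2), F m = -(Real.cos (2 * π * (j : ℕ) * m / p))⁻¹ := by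
      intro m hm
      rw [mem_Ico] at hm
      rw [hF]
      dsimp only
      rw [if_neg (by omega)]
      ring
    rw [hF0, Finset.sum_congr rfl hFm, Finset.sum_neg_distrib, hrow]
    ring
end

section
/- Let p be a prime with p ≡ 3 (mod 4). Then det[(sec(2πjk/p) − 1)_{1 ≤ j,k ≤ (p−1)/2}] = (2p/(p+1)) · det[(sec(2πjk/p))_{1 ≤ j,k ≤ (p−1)/2}]. -/
open scoped Real
open Finset

private lemma aux_pow_mod {ζ : ℂ} {p : ℕ} (hζ : ζ ^ p = 1) (n : ℕ) : ζ ^ (n % p) = ζ ^ n := by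
  conv_rhs => rw [← Nat.div_add_mod n p]
  rw [pow_add, pow_mul, hζ, one_pow, one_mul]

private lemma aux_pow_congr {ζ : ℂ} {p : ℕ} (hζ : ζ ^ p = 1) {a b : ℕ} (h : a % p = b % p) :
    ζ ^ a = ζ ^ b := by rw [← aux_pow_mod hζ a, h, aux_pow_mod hζ b]

/-- full sum of secants over a period is `-p` when `p ≡ 3 [MOD 4]`. -/
private lemma sec_full_sum (p : ℕ) (hp : p.Prime) (h3 : p % 4 = 3) (a : ℕ) (ha : ¬ p ∣ a) :
    ∑ n ∈ Finset.range p, (Real.cos (2 * π * ((a * n : ℕ) : ℝ) / p))⁻¹ = -(p : ℝ) := by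
  have hp0 : (0:ℕ) < p := by omega
  have hpC : (p:ℂ) ≠ 0 := Nat.cast_ne_zero.mpr (by omega)
  set ω : ℂ := Complex.exp (2 * (π:ℂ) * Complex.I * a / p) with hω
  have hω0 : ω ≠ 0 := Complex.exp_ne_zero _
  have hωp : ω ^ p = 1 := by
    rw [hω, ← Complex.exp_nat_mul]
    have h : (p:ℂ) * (2 * (π:ℂ) * Complex.I * a / p) = (a:ℤ) * (2 * (π:ℂ) * Complex.I) := by
      push_cast; field_simp
    rw [h, Complex.exp_int_mul_two_pi_mul_I]
  have hpow1 : ∀ u : ℕ, ω ^ u = 1 ↔ p ∣ u := by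
    intro u
    constructor
    · intro h
      rw [hω, ← Complex.exp_nat_mul, Complex.exp_eq_one_iff] at h
      obtain ⟨k, hk⟩ := h
      have h2πI : (2 * (π:ℂ) * Complex.I) ≠ 0 := by
        simp [Complex.I_ne_zero, Real.pi_ne_zero, Complex.ofReal_ne_zero]
      have key : ((u:ℂ) * a) / p = (k:ℂ) := by
        apply mul_left_cancel₀ h2πI
        linear_combination hk
      rw [div_eq_iff hpC] at key
      have h2 : ((u * a : ℕ) : ℤ) = k * p := by exact_mod_cast key
      have h3 : (p:ℤ) ∣ ((u * a : ℕ) : ℤ) := ⟨k, by linarith⟩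
      have h4 : p ∣ u * a := Int.natCast_dvd_natCast.mp h3
      rcases (Nat.Prime.dvd_mul hp).mp h4 with h5 | h5
      · exact h5
      · exact absurd h5 ha
    · rintro ⟨t, rfl⟩
      rw [pow_mul, hωp, one_pow]
  have hne : ∀ t : ℕ, ω ^ t + 1 ≠ 0 := by
    intro t h
    have hm1 : ω ^ t = -1 := by linear_combination h
    have h2 : ω ^ (2 * t) = 1 := by
      rw [mul_comm, pow_mul, hm1]; norm_num
    have hdvd := (hpow1 (2 * t)).mp h2
    have hpt : p ∣ t := by
      rcases (Nat.Prime.dvd_mul hp).mp hdvd with h5 | h5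
      · have := Nat.le_of_dvd (by norm_num) h5; omega
      · exact h5
    have : ω ^ t = 1 := (hpow1 t).mpr hpt
    rw [this] at hm1; norm_num at hm1
  -- step A : complexify each term
  have hterm : ∀ n : ℕ, (((Real.cos (2 * π * ((a * n : ℕ) : ℝ) / p))⁻¹ : ℝ) : ℂ)
      = 2 * ω ^ n / (ω ^ (2 * n) + 1) := by
    intro n
    have hx0 : ω ^ n ≠ 0 := pow_ne_zero _ hω0
    have hxI : ((2 * π * ((a * n : ℕ) : ℝ) / p : ℝ) : ℂ) * Complex.I
        = (n : ℂ) * (2 * (π:ℂ) * Complex.I * a / p) := by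
      push_cast; field_simp
    have hexp : Complex.exp (((2 * π * ((a * n : ℕ) : ℝ) / p : ℝ) : ℂ) * Complex.I) = ω ^ n := by
      rw [hxI, hω, ← Complex.exp_nat_mul]
    rw [Complex.ofReal_inv, Complex.ofReal_cos, Complex.cos, neg_mul, Complex.exp_neg, hexp]
    have h1 : ω ^ n + (ω ^ n)⁻¹ = (ω ^ (2 * n) + 1) / ω ^ n := by
      rw [two_mul, pow_add]; field_simp
    rw [h1, div_div, inv_div, mul_comm (ω ^ n) 2]
  -- the complex sum
  set r : ℕ := (p + 1) / 2 with hr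
  have h2r : 2 * r = p + 1 := by omega
  set m : ℕ := (p - 1) / 2 with hmdef
  have hrm : r + m = p := by omega
  have hmod : ∀ n : ℕ, ω ^ (n % p) = ω ^ n := aux_pow_mod hωp
  have hB : ∑ n ∈ Finset.range p, 2 * ω ^ n / (ω ^ (2 * n) + 1)
      = ∑ t ∈ Finset.range p, 2 * ω ^ (r * t) / (ω ^ t + 1) := by
    refine Finset.sum_nbij' (fun n => (2 * n) % p) (fun t => (r * t) % p) ?_ ?_ ?_ ?_ ?_
    · intro n _; exact Finset.mem_range.mpr (Nat.mod_lt _ hp0)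
    · intro t _; exact Finset.mem_range.mpr (Nat.mod_lt _ hp0)
    · intro n hn
      have hn' := Finset.mem_range.mp hn
      show r * (2 * n % p) % p = n
      have e1 : r * (2 * n) = p * n + n := by
        calc r * (2 * n) = (2 * r) * n := by ring
          _ = (p + 1) * n := by rw [h2r]
          _ = p * n + n := by ring
      calc r * (2 * n % p) % p = r * (2 * n) % p :=
            (Nat.ModEq.mul_left r (Nat.mod_modEq (2 * n) p))
        _ = (p * n + n) % p := by rw [e1]
        _ = n % p := by rw [Nat.mul_add_mod]
        _ = n := Nat.mod_eq_of_lt hn'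
    · intro t ht
      have ht' := Finset.mem_range.mp ht
      show 2 * (r * t % p) % p = t
      have e1 : 2 * (r * t) = p * t + t := by
        calc 2 * (r * t) = (2 * r) * t := by ring
          _ = (p + 1) * t := by rw [h2r]
          _ = p * t + t := by ring
      calc 2 * (r * t % p) % p = 2 * (r * t) % p :=
            (Nat.ModEq.mul_left 2 (Nat.mod_modEq (r * t) p))
        _ = (p * t + t) % p := by rw [e1]
        _ = t % p := by rw [Nat.mul_add_mod]
        _ = t := Nat.mod_eq_of_lt ht'
    · intro n _
      show 2 * ω ^ n / (ω ^ (2 * n) + 1) = 2 * ω ^ (r * (2 * n % p)) / (ω ^ (2 * n % p) + 1)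
      have e1 : ω ^ (2 * n % p) = ω ^ (2 * n) := hmod _
      have e2 : ω ^ (r * (2 * n % p)) = ω ^ n := by
        rw [aux_pow_congr hωp (a := r * (2 * n % p)) (b := r * (2 * n))
          ((Nat.ModEq.mul_left r (Nat.mod_modEq (2 * n) p)))]
        have e3 : r * (2 * n) = p * n + n := by
          calc r * (2 * n) = (2 * r) * n := by ring
            _ = (p + 1) * n := by rw [h2r]
            _ = p * n + n := by ring
        rw [e3, pow_add, pow_mul, hωp, one_pow, one_mul]
      rw [e1, e2]
  have hC : ∀ t : ℕ, (∑ s ∈ Finset.range p, (-1 : ℂ) ^ s * ω ^ (t * s)) * (ω ^ t + 1) = 2 := by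
    intro t
    have hgeom := geom_sum_mul (-(ω ^ t)) p
    have hodd : Odd p := by
      refine Nat.odd_iff.mpr ?_; omega
    have hnp : (-(ω ^ t)) ^ p = -(ω ^ (t * p)) := by
      rw [Odd.neg_pow hodd, ← pow_mul]
    have hωtp : ω ^ (t * p) = 1 := by rw [mul_comm, pow_mul, hωp, one_pow]
    have hsummand : ∀ s : ℕ, (-(ω ^ t)) ^ s = (-1 : ℂ) ^ s * ω ^ (t * s) := by
      intro s; rw [neg_pow, ← pow_mul]
    calc (∑ s ∈ Finset.range p, (-1 : ℂ) ^ s * ω ^ (t * s)) * (ω ^ t + 1)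
        = -((∑ s ∈ Finset.range p, (-(ω ^ t)) ^ s) * (-(ω ^ t) - 1)) := by
          rw [Finset.sum_congr rfl fun s _ => (hsummand s).symm]; ring
      _ = -((-(ω ^ t)) ^ p - 1) := by rw [hgeom]
      _ = 2 := by rw [hnp, hωtp]; ring
  have hCsum : ∀ t : ℕ, 2 * ω ^ (r * t) / (ω ^ t + 1)
      = ∑ s ∈ Finset.range p, (-1 : ℂ) ^ s * ω ^ (r * t + t * s) := by
    intro t
    have hs : ∑ s ∈ Finset.range p, (-1:ℂ) ^ s * ω ^ (r * t + t * s)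
        = ω ^ (r * t) * ∑ s ∈ Finset.range p, (-1:ℂ) ^ s * ω ^ (t * s) := by
      rw [Finset.mul_sum]
      exact Finset.sum_congr rfl fun s _ => by rw [pow_add]; ring
    rw [div_eq_iff (hne t), hs, mul_assoc, hC t]; ring
  have hD : ∑ t ∈ Finset.range p, ∑ s ∈ Finset.range p, (-1 : ℂ) ^ s * ω ^ (r * t + t * s)
      = -(p : ℂ) := by
    rw [Finset.sum_comm]
    have hinner : ∀ s ∈ Finset.range p,
        (∑ t ∈ Finset.range p, (-1 : ℂ) ^ s * ω ^ (r * t + t * s))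
        = if s = m then (-1 : ℂ) ^ s * p else 0 := by
      intro s hs
      have hs' := Finset.mem_range.mp hs
      have hexp : ∀ t : ℕ, ω ^ (r * t + t * s) = (ω ^ (r + s)) ^ t := by
        intro t; rw [← pow_mul]; congr 1; ring
      by_cases hsm : s = m
      · subst hsm
        simp only [hexp, hrm, hωp, one_pow, if_pos rfl]
        rw [← Finset.mul_sum]
        simp
      · rw [if_neg hsm]
        simp only [hexp]
        have hx1 : ω ^ (r + s) ≠ 1 := by
          intro h
          have := (hpow1 (r + s)).mp h
          have h5 : r + s = p := Nat.eq_of_dvd_of_lt_two_mul (by omega) this (by omega)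
          omega
        have hxp : (ω ^ (r + s)) ^ p = 1 := by rw [← pow_mul, mul_comm, pow_mul, hωp, one_pow]
        rw [← Finset.mul_sum, geom_sum_eq hx1, hxp]
        simp
    rw [Finset.sum_congr rfl hinner, Finset.sum_ite_eq' (Finset.range p) m]
    have hmm : m ∈ Finset.range p := Finset.mem_range.mpr (by omega)
    rw [if_pos hmm]
    have hmo : Odd m := Nat.odd_iff.mpr (by omega)
    rw [hmo.neg_one_pow]; ring
  have hfinal : ((∑ n ∈ Finset.range p, (Real.cos (2 * π * ((a * n : ℕ) : ℝ) / p))⁻¹ : ℝ) : ℂ)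
      = -(p : ℂ) := by
    rw [Complex.ofReal_sum]
    rw [Finset.sum_congr rfl fun n _ => hterm n]
    rw [hB, Finset.sum_congr rfl fun t _ => hCsum t, hD]
  exact_mod_cast hfinal

private lemma sec_half_sum (p : ℕ) (hp : p.Prime) (h3 : p % 4 = 3) (a : ℕ) (ha : ¬ p ∣ a) :
    ∑ n ∈ Finset.Ico 1 ((p - 1) / 2 + 1), (Real.cos (2 * π * ((a * n : ℕ) : ℝ) / p))⁻¹
      = -((p : ℝ) + 1) / 2 := by
  have hp0 : (0:ℕ) < p := by omega
  have hpR : (p:ℝ) ≠ 0 := Nat.cast_ne_zero.mpr (by omega)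
  set m : ℕ := (p - 1) / 2 with hm
  have hmp : 2 * m + 1 = p := by omega
  have feq : ∀ B C : ℕ, (B + C) % p = 0 →
      (Real.cos (2 * π * (B:ℝ) / p))⁻¹ = (Real.cos (2 * π * (C:ℝ) / p))⁻¹ := by
    intro B C h
    obtain ⟨N, hN⟩ := (Nat.dvd_of_mod_eq_zero h)
    have hBC : (B:ℝ) + C = (p:ℝ) * N := by exact_mod_cast hN
    have harg : 2 * π * (B:ℝ) / p = (N:ℝ) * (2 * π) - 2 * π * (C:ℝ) / p := by
      rw [eq_sub_iff_add_eq, ← add_div, div_eq_iff hpR]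
      linear_combination (2 * π) * hBC
    rw [harg, Real.cos_nat_mul_two_pi_sub]
  have hfull := sec_full_sum p hp h3 a ha
  have h01 : ∑ n ∈ Finset.Ico 0 1, (Real.cos (2 * π * ((a * n : ℕ) : ℝ) / p))⁻¹ = 1 := by
    simp
  have hsplit0 : ∑ n ∈ Finset.Ico 0 1, (Real.cos (2 * π * ((a * n : ℕ) : ℝ) / p))⁻¹
      + ∑ n ∈ Finset.Ico 1 p, (Real.cos (2 * π * ((a * n : ℕ) : ℝ) / p))⁻¹ = -(p:ℝ) := by
    rw [Finset.sum_Ico_consecutive _ (by omega) (by omega)]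
    rw [← Finset.range_eq_Ico] at *
    exact hfull
  have hsplit1 : ∑ n ∈ Finset.Ico 1 (m + 1), (Real.cos (2 * π * ((a * n : ℕ) : ℝ) / p))⁻¹
      + ∑ n ∈ Finset.Ico (m + 1) p, (Real.cos (2 * π * ((a * n : ℕ) : ℝ) / p))⁻¹
      = ∑ n ∈ Finset.Ico 1 p, (Real.cos (2 * π * ((a * n : ℕ) : ℝ) / p))⁻¹ :=
    Finset.sum_Ico_consecutive _ (by omega) (by omega)
  have hrefl : ∑ n ∈ Finset.Ico (m + 1) p, (Real.cos (2 * π * ((a * n : ℕ) : ℝ) / p))⁻¹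
      = ∑ n ∈ Finset.Ico 1 (m + 1), (Real.cos (2 * π * ((a * n : ℕ) : ℝ) / p))⁻¹ := by
    refine Finset.sum_nbij' (fun n => p - n) (fun n => p - n) ?_ ?_ ?_ ?_ ?_
    · intro n hn; rw [Finset.mem_Ico] at hn; show p - n ∈ Finset.Ico 1 (m + 1)
      rw [Finset.mem_Ico]; omega
    · intro n hn; rw [Finset.mem_Ico] at hn; show p - n ∈ Finset.Ico (m + 1) p
      rw [Finset.mem_Ico]; omega
    · intro n hn; rw [Finset.mem_Ico] at hn; show p - (p - n) = n; omega
    · intro n hn; rw [Finset.mem_Ico] at hn; show p - (p - n) = n; omega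
    · intro n hn
      rw [Finset.mem_Ico] at hn
      show _ = (Real.cos (2 * π * ((a * (p - n) : ℕ) : ℝ) / p))⁻¹
      apply feq
      have : a * n + a * (p - n) = a * p := by
        rw [← Nat.mul_add]; congr 1; omega
      rw [this, Nat.mul_mod_left]
  linarith [hsplit0, hsplit1, hrefl, h01]

private lemma det_sub_one (n : ℕ) (hn : 0 < n) (A : Matrix (Fin n) (Fin n) ℝ) (c : ℝ)
    (hc : c ≠ 0) (hcol : ∀ k, ∑ j, A j k = c) :
    Matrix.det (Matrix.of fun j k => A j k - 1) = ((c - n) / c) * Matrix.det A := by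
  set i0 : Fin n := ⟨0, hn⟩ with hi0
  set B : Matrix (Fin n) (Fin n) ℝ := Matrix.of fun j k => A j k - 1 with hB
  set W := A.updateRow i0 (fun _ => (1:ℝ)) with hW
  set W' := B.updateRow i0 (fun _ => (1:ℝ)) with hW'
  have hA : Matrix.det A = c * Matrix.det W := by
    have h1 := Matrix.det_updateRow_sum A i0 (fun _ => (1:ℝ))
    have hsum : (∑ j, (1:ℝ) • A j) = c • (fun _ => (1:ℝ)) := by
      funext k
      simp only [Finset.sum_apply, Pi.smul_apply, one_smul, smul_eq_mul, mul_one]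
      exact (Finset.sum_apply k _ _).trans (hcol k)
    rw [hsum, Matrix.det_updateRow_smul] at h1
    simpa using h1.symm
  have hBcol : ∀ k, ∑ j, B j k = c - n := by
    intro k
    simp only [hB, Matrix.of_apply, Finset.sum_sub_distrib, Finset.sum_const,
      Finset.card_univ, Fintype.card_fin, nsmul_eq_mul, mul_one]
    rw [hcol k]
  have hBdet : Matrix.det B = (c - n) * Matrix.det W' := by
    have h1 := Matrix.det_updateRow_sum B i0 (fun _ => (1:ℝ))
    have hsum : (∑ j, (1:ℝ) • B j) = (c - n) • (fun _ => (1:ℝ)) := by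
      funext k
      simp only [Finset.sum_apply, Pi.smul_apply, one_smul, smul_eq_mul, mul_one]
      exact (Finset.sum_apply k _ _).trans (hBcol k)
    rw [hsum, Matrix.det_updateRow_smul] at h1
    simpa using h1.symm
  set v : Fin n → ℝ := fun j => if j = i0 then 1 else -1 with hv
  set L := Matrix.updateCol (1 : Matrix (Fin n) (Fin n) ℝ) i0 v with hL
  have hdetL : L.det = 1 := by
    rw [hL, ← Matrix.cramer_apply, Matrix.cramer_one]
    simp [hv]
  have hLW : L * W = W' := by
    ext j k
    rw [Matrix.mul_apply]
    by_cases hj : j = i0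
    · subst hj
      have hterm : ∀ t, L i0 t * W t k = if t = i0 then W i0 k else 0 := by
        intro t
        by_cases ht : t = i0
        · subst ht; simp [hL, hv, Matrix.updateCol_apply]
        · simp [hL, hv, Matrix.updateCol_apply, ht, Matrix.one_apply, Ne.symm ht]
      rw [Finset.sum_congr rfl fun t _ => hterm t, Finset.sum_ite_eq' Finset.univ i0,
        if_pos (Finset.mem_univ _)]
      simp [hW, hW']
    · have hterm : ∀ t, L j t * W t k
          = (if t = i0 then -W i0 k else 0) + (if t = j then W j k else 0) := by
        intro t
        by_cases ht : t = i0
        · subst ht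
          simp [hL, hv, Matrix.updateCol_apply, hj, Ne.symm hj]
        · by_cases htj : t = j
          · subst htj
            simp [hL, hv, Matrix.updateCol_apply, ht, Matrix.one_apply]
          · simp [hL, hv, Matrix.updateCol_apply, ht, htj, Matrix.one_apply,
              Ne.symm htj]
      rw [Finset.sum_congr rfl fun t _ => hterm t, Finset.sum_add_distrib,
        Finset.sum_ite_eq' Finset.univ i0, Finset.sum_ite_eq' Finset.univ j,
        if_pos (Finset.mem_univ _), if_pos (Finset.mem_univ _)]
      simp [hW, hW', hB, hj, Matrix.updateRow_apply]
      ring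
  have hdetW' : W'.det = W.det := by rw [← hLW, Matrix.det_mul, hdetL, one_mul]
  have hWdet : Matrix.det W = Matrix.det A / c := by
    rw [hA]; field_simp
  rw [← hB] at *
  rw [hBdet, hdetW', hWdet]
  field_simp

/-- Let `p` be a prime with `p ≡ 3 (mod 4)`. Then
`det[(sec(2πjk/p) - 1)_{1 ≤ j,k ≤ (p-1)/2}] = (2p/(p+1)) · det[(sec(2πjk/p))_{1 ≤ j,k ≤ (p-1)/2}]`. -/
theorem statement13 (p : ℕ) (hp : p.Prime) (h3 : p % 4 = 3) :
    Matrix.det (Matrix.of fun j k : Fin ((p - 1) / 2) =>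
        (Real.cos (2 * π * ((j : ℕ) + 1) * ((k : ℕ) + 1) / p))⁻¹ - 1) =
      (2 * (p : ℝ) / ((p : ℝ) + 1)) *
        Matrix.det (Matrix.of fun j k : Fin ((p - 1) / 2) =>
          (Real.cos (2 * π * ((j : ℕ) + 1) * ((k : ℕ) + 1) / p))⁻¹) := by
  have hp3 : 3 ≤ p := by omega
  have hmp : 2 * ((p - 1) / 2) + 1 = p := by omega
  set m : ℕ := (p - 1) / 2 with hm
  set A : Matrix (Fin m) (Fin m) ℝ := Matrix.of fun j k =>
    (Real.cos (2 * π * ((j : ℕ) + 1) * ((k : ℕ) + 1) / p))⁻¹ with hA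
  set c : ℝ := -((p : ℝ) + 1) / 2 with hc
  have hpR : (0:ℝ) < (p:ℝ) + 1 := by positivity
  have hc0 : c ≠ 0 := by
    rw [hc]; intro h
    have : (p:ℝ) + 1 = 0 := by linarith [h]
    linarith
  have hcol : ∀ k : Fin m, ∑ j, A j k = c := by
    intro k
    have hka : ¬ p ∣ (k.val + 1) := by
      intro hdvd
      have h1 := Nat.le_of_dvd (by omega) hdvd
      have h2 := k.isLt
      omega
    have hhalf := sec_half_sum p hp h3 (k.val + 1) hka
    rw [← hm] at hhalf
    rw [Finset.sum_Ico_eq_sum_range] at hhalf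
    simp only [Nat.add_sub_cancel] at hhalf
    rw [hc, ← hhalf, ← Fin.sum_univ_eq_sum_range (fun i => (Real.cos (2 * π *
      (((k.val + 1) * (1 + i) : ℕ) : ℝ) / p))⁻¹) m]
    refine Finset.sum_congr rfl fun j _ => ?_
    simp only [hA, Matrix.of_apply]
    congr 2
    push_cast
    ring
  have h := det_sub_one m (by omega) A c hc0 hcol
  have hmR : (m : ℝ) = ((p : ℝ) - 1) / 2 := by
    have : ((2 * m + 1 : ℕ) : ℝ) = (p : ℝ) := by exact_mod_cast congrArg (Nat.cast : ℕ → ℝ) hmp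
    push_cast at this
    linarith
  have hcoef : (c - (m:ℝ)) / c = 2 * (p : ℝ) / ((p : ℝ) + 1) := by
    rw [hc, hmR]
    rw [div_eq_div_iff (by linarith) (by linarith)]
    ring
  rw [← hcoef]
  exact h
end
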